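/- arXiv:2010.11293 — 9 statements merged into one kernel-verified Lean document; each statement's English description precedes it below -/
import Mathlib

section
/- Let E be a strongly deflation-exact category and consider a morphism of conflations, i.e., a commutative diagram whose rows X ↣ Y ↠ Z and X' ↣ Y' ↠ Z' are conflations, with vertical morphisms u : X → X', v : Y → Y', w : Z → Z'. Then: (1) if w is an isomorphism, u is a deflation if and only if v is a deflation; (2) if u and w are both deflations, then v is a deflation. -/
open CategoryTheory CategoryTheory.Limits ZeroObject

attribute [local instance] CategoryTheory.Limits.hasBinaryBiproducts_of_finite_biproducts

universe v u

section Preamble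

variable {C : Type u} [Category.{v} C] [Preadditive C] [HasZeroObject C]
  [HasFiniteBiproducts C]

/-- `(f, g)` is a kernel-cokernel pair: `f` is a kernel of `g` and `g` is a cokernel of `f`. -/
structure IsKernelCokernelPair {X Y Z : C} (f : X ⟶ Y) (g : Y ⟶ Z) : Prop where
  comp_zero : f ≫ g = 0
  isKernel : Nonempty (IsLimit (KernelFork.ofι f comp_zero))
  isCokernel : Nonempty (IsColimit (CokernelCofork.ofπ g comp_zero))

/-- `k` is a kernel of `g`. -/
def IsKernelOf {K Y Z : C} (k : K ⟶ Y) (g : Y ⟶ Z) : Prop :=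
  ∃ w : k ≫ g = 0, Nonempty (IsLimit (KernelFork.ofι k w))

/-- `c` is a cokernel of `f`. -/
def IsCokernelOf {X Y Q : C} (c : Y ⟶ Q) (f : X ⟶ Y) : Prop :=
  ∃ w : f ≫ c = 0, Nonempty (IsColimit (CokernelCofork.ofπ c w))

/-- All pullbacks along `g` exist. -/
def HasAllPullbacksAlong {Y Z : C} (g : Y ⟶ Z) : Prop :=
  ∀ ⦃W : C⦄ (h : W ⟶ Z), ∃ (P : C) (p₁ : P ⟶ Y) (p₂ : P ⟶ W), IsPullback p₁ p₂ g h

/-- An additive category is weakly idempotent complete if every retraction has a kernel. -/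
def WeaklyIdempotentComplete (C : Type u) [Category.{v} C] [Preadditive C]
    [HasZeroObject C] [HasFiniteBiproducts C] : Prop :=
  ∀ ⦃X Y : C⦄ (r : X ⟶ Y), (∃ s : Y ⟶ X, s ≫ r = 𝟙 Y) → HasKernel r

end Preamble

/-- A conflation structure on an additive category: a class of kernel-cokernel pairs
closed under isomorphisms.  The first morphism of a conflation is called an inflation,
the second a deflation. -/
structure ConflationStruct (C : Type u) [Category.{v} C] [Preadditive C]
    [HasZeroObject C] [HasFiniteBiproducts C] where
  IsConflation : ∀ ⦃X Y Z : C⦄, (X ⟶ Y) → (Y ⟶ Z) → Prop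
  kernelCokernel : ∀ ⦃X Y Z : C⦄ ⦃f : X ⟶ Y⦄ ⦃g : Y ⟶ Z⦄,
    IsConflation f g → IsKernelCokernelPair f g
  iso_closed : ∀ ⦃X Y Z X' Y' Z' : C⦄ ⦃f : X ⟶ Y⦄ ⦃g : Y ⟶ Z⦄ ⦃f' : X' ⟶ Y'⦄ ⦃g' : Y' ⟶ Z'⦄
    (eX : X ≅ X') (eY : Y ≅ Y') (eZ : Z ≅ Z'),
    f ≫ eY.hom = eX.hom ≫ f' → g ≫ eZ.hom = eY.hom ≫ g' →
    IsConflation f g → IsConflation f' g'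

namespace ConflationStruct

variable {C : Type u} [Category.{v} C] [Preadditive C] [HasZeroObject C]
  [HasFiniteBiproducts C] (S : ConflationStruct C)

/-- A morphism is an inflation if it is the first morphism of some conflation. -/
def IsInflation {X Y : C} (f : X ⟶ Y) : Prop := ∃ (Z : C) (g : Y ⟶ Z), S.IsConflation f g

/-- A morphism is a deflation if it is the second morphism of some conflation. -/
def IsDeflation {Y Z : C} (g : Y ⟶ Z) : Prop := ∃ (X : C) (f : X ⟶ Y), S.IsConflation f g

/-- A deflation-exact category: axioms (R0), (R1), (R2). -/
structure IsDeflationExact : Prop where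
  R0 : S.IsDeflation (𝟙 (0 : C))
  R1 : ∀ ⦃X Y Z : C⦄ ⦃g : X ⟶ Y⦄ ⦃h : Y ⟶ Z⦄,
    S.IsDeflation g → S.IsDeflation h → S.IsDeflation (g ≫ h)
  R2 : ∀ ⦃Y Z : C⦄ ⦃g : Y ⟶ Z⦄, S.IsDeflation g → ∀ ⦃W : C⦄ (h : W ⟶ Z),
    ∃ (P : C) (p₁ : P ⟶ Y) (p₂ : P ⟶ W), IsPullback p₁ p₂ g h ∧ S.IsDeflation p₂

/-- An inflation-exact category: axioms (L0), (L1), (L2). -/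
structure IsInflationExact : Prop where
  L0 : S.IsInflation (𝟙 (0 : C))
  L1 : ∀ ⦃X Y Z : C⦄ ⦃f : X ⟶ Y⦄ ⦃g : Y ⟶ Z⦄,
    S.IsInflation f → S.IsInflation g → S.IsInflation (f ≫ g)
  L2 : ∀ ⦃X Y : C⦄ ⦃f : X ⟶ Y⦄, S.IsInflation f → ∀ ⦃W : C⦄ (h : X ⟶ W),
    ∃ (Q : C) (q₁ : Y ⟶ Q) (q₂ : W ⟶ Q), IsPushout f h q₁ q₂ ∧ S.IsInflation q₂

/-- Axiom (R0*): for every object `A`, the morphism `A ⟶ 0` is a deflation. -/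
def AxiomR0star : Prop := ∀ A : C, S.IsDeflation (0 : A ⟶ (0 : C))

/-- Axiom (R3), the obscure axiom: if `p` has a kernel and `i ≫ p` is a deflation,
then `p` is a deflation. -/
def AxiomR3 : Prop := ∀ ⦃A B Q : C⦄ (i : A ⟶ B) (p : B ⟶ Q),
  HasKernel p → S.IsDeflation (i ≫ p) → S.IsDeflation p

/-- Axiom (R3−): if `f ≫ g` is a deflation and all pullbacks along `g` exist,
then `g` is a deflation. -/
def AxiomR3minus : Prop := ∀ ⦃X Y Z : C⦄ (f : X ⟶ Y) (g : Y ⟶ Z),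
  S.IsDeflation (f ≫ g) → HasAllPullbacksAlong g → S.IsDeflation g

/-- Axiom (R3+): if `f ≫ g` is a deflation, then `g` is a deflation. -/
def AxiomR3plus : Prop := ∀ ⦃X Y Z : C⦄ (f : X ⟶ Y) (g : Y ⟶ Z),
  S.IsDeflation (f ≫ g) → S.IsDeflation g

/-- A morphism is admissible if it factors as a deflation followed by an inflation. -/
def IsAdmissible {X Y : C} (f : X ⟶ Y) : Prop :=
  ∃ (I : C) (e : X ⟶ I) (m : I ⟶ Y), S.IsDeflation e ∧ S.IsInflation m ∧ e ≫ m = f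

/-- Exactness of a pair of composable admissible morphisms at the middle object:
the inflation (image) part of `f` is a kernel of `g`, and the deflation (coimage)
part of `g` is a cokernel of `f`. -/
def ExactAt {X Y Z : C} (f : X ⟶ Y) (g : Y ⟶ Z) : Prop :=
  (∃ (I : C) (e : X ⟶ I) (m : I ⟶ Y),
    S.IsDeflation e ∧ S.IsInflation m ∧ e ≫ m = f ∧ IsKernelOf m g) ∧
  (∃ (J : C) (e' : Y ⟶ J) (m' : J ⟶ Z),
    S.IsDeflation e' ∧ S.IsInflation m' ∧ e' ≫ m' = g ∧ IsCokernelOf e' f)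

/-- A `P`-deflation: (P1) all pullbacks along `f` exist, and (P2) there is a morphism
`h` such that `h ≫ f` is a deflation. -/
def IsPDeflation {X Y : C} (f : X ⟶ Y) : Prop :=
  HasAllPullbacksAlong f ∧ ∃ (W : C) (h : W ⟶ X), S.IsDeflation (h ≫ f)

end ConflationStruct

section DeflationHelpers

variable {C : Type u} [Category.{v} C] [Preadditive C] [HasZeroObject C]
  [HasFiniteBiproducts C] (S : ConflationStruct C)

/-- Deflations are closed under isomorphism of arrows. -/
lemma deflation_of_iso {Y Z Y₁ Z₁ : C} {g : Y ⟶ Z} {g₁ : Y₁ ⟶ Z₁}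
    (eY : Y ≅ Y₁) (eZ : Z ≅ Z₁) (hcomm : g ≫ eZ.hom = eY.hom ≫ g₁)
    (hg : S.IsDeflation g) : S.IsDeflation g₁ := by
  obtain ⟨X, f, hconf⟩ := hg
  exact ⟨X, f ≫ eY.hom, S.iso_closed (Iso.refl X) eY eZ (by simp) hcomm hconf⟩

/-- Any pullback of a deflation is a deflation. -/
lemma deflation_of_isPullback (hDE : S.IsDeflationExact) {P W Y Z : C}
    {p₁ : P ⟶ Y} {p₂ : P ⟶ W} {g : Y ⟶ Z} {h : W ⟶ Z}
    (hg : S.IsDeflation g) (hpb : IsPullback p₁ p₂ g h) : S.IsDeflation p₂ := by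
  obtain ⟨P', q₁, q₂, hpb', hq₂⟩ := hDE.R2 hg h
  refine deflation_of_iso S (hpb.isoIsPullback _ _ hpb').symm (Iso.refl W) ?_ hq₂
  rw [Iso.refl_hom, Category.comp_id, Iso.symm_hom]
  exact (hpb.isoIsPullback_inv_snd _ _ hpb').symm

/-- Every isomorphism is a deflation. -/
lemma deflation_of_isIso (hDE : S.IsDeflationExact) {Z Z' : C} (w : Z ⟶ Z') [IsIso w] :
    S.IsDeflation w := by
  have hcomm : (0 : Z ⟶ (0 : C)) ≫ 𝟙 (0 : C) = 𝟙 Z ≫ (0 : Z ⟶ (0 : C)) := by simp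
  have hlim : IsLimit (PullbackCone.mk (0 : Z ⟶ (0 : C)) (𝟙 Z) hcomm) := by
    refine PullbackCone.IsLimit.mk hcomm (fun s => s.snd) (fun s => ?_) (fun s => by simp)
      (fun s m _ hm => by simpa using hm)
    exact (isZero_zero C).eq_of_tgt _ _
  have hid : S.IsDeflation (𝟙 Z) :=
    deflation_of_isPullback S hDE hDE.R0 (IsPullback.of_isLimit hlim)
  exact deflation_of_iso S (Iso.refl Z) (asIso w) (by simp) hid

/-- The core case of the deflation lemma: a morphism of conflations with the same
third object and identity on it.  If `u` is a deflation then so is `v`. -/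
lemma deflation_core (hDE : S.IsDeflationExact) (hR3 : S.AxiomR3)
    {X Y Z X' Y' : C} {f : X ⟶ Y} {g : Y ⟶ Z} {f' : X' ⟶ Y'} {g' : Y' ⟶ Z}
    (htop : S.IsConflation f g) (hbot : S.IsConflation f' g')
    {u : X ⟶ X'} {v : Y ⟶ Y'} (hsq₁ : f ≫ v = u ≫ f') (hsq₂ : g = v ≫ g')
    (hu : S.IsDeflation u) : S.IsDeflation v := by
  obtain ⟨hfg, ⟨hfk⟩, -⟩ := S.kernelCokernel htop
  obtain ⟨hfg', ⟨hfk'⟩, -⟩ := S.kernelCokernel hbot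
  have monof : Mono f := ⟨fun a b hab => Fork.IsLimit.hom_ext hfk (by simpa using hab)⟩
  have monof' : Mono f' := ⟨fun a b hab => Fork.IsLimit.hom_ext hfk' (by simpa using hab)⟩
  -- kernel of u
  obtain ⟨K, k₀, hconfu⟩ := id hu
  obtain ⟨hk₀u, ⟨hk₀k⟩, -⟩ := S.kernelCokernel hconfu
  have monok₀ : Mono k₀ := ⟨fun a b hab => Fork.IsLimit.hom_ext hk₀k (by simpa using hab)⟩
  -- `k₀ ≫ f` is a kernel of `v`
  have hkv : (k₀ ≫ f) ≫ v = 0 := by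
    rw [Category.assoc, hsq₁, ← Category.assoc, hk₀u, zero_comp]
  have monokf : Mono (k₀ ≫ f) := mono_comp _ _
  have hKv : IsLimit (KernelFork.ofι (k₀ ≫ f) hkv) := by
    refine KernelFork.IsLimit.ofι' _ hkv (fun {T} t ht => ?_)
    have htg : t ≫ g = 0 := by rw [hsq₂, ← Category.assoc, ht, zero_comp]
    obtain ⟨a, ha⟩ := KernelFork.IsLimit.lift' hfk t htg
    simp only [Fork.ι_ofι] at ha
    have hau : a ≫ u = 0 := by
      rw [← cancel_mono f', Category.assoc, ← hsq₁, ← Category.assoc, ha, ht, zero_comp]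
    obtain ⟨b, hb⟩ := KernelFork.IsLimit.lift' hk₀k a hau
    simp only [Fork.ι_ofι] at hb
    exact ⟨b, by rw [← Category.assoc, hb, ha]⟩
  have hHasKer : HasKernel v := HasLimit.mk ⟨_, hKv⟩
  -- `biprod.map u (𝟙 Y)` is a deflation (pullback of `u` along `biprod.fst`)
  have hΘcomm : (biprod.fst : X ⊞ Y ⟶ X) ≫ u = biprod.map u (𝟙 Y) ≫ biprod.fst := by simp
  have hΘpb : IsPullback (biprod.fst : X ⊞ Y ⟶ X) (biprod.map u (𝟙 Y)) u biprod.fst := by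
    refine IsPullback.of_isLimit (PullbackCone.IsLimit.mk hΘcomm
      (fun s => biprod.lift s.fst (s.snd ≫ biprod.snd)) (fun s => by simp)
      (fun s => ?_) (fun s m hm₁ hm₂ => ?_))
    · apply biprod.hom_ext
      · simp [s.condition]
      · simp
    · apply biprod.hom_ext
      · simpa using hm₁
      · have : m ≫ biprod.map u (𝟙 Y) ≫ biprod.snd = s.snd ≫ biprod.snd := by
          rw [← Category.assoc, hm₂]
        simpa using this
  have hΘ : S.IsDeflation (biprod.map u (𝟙 Y)) := deflation_of_isPullback S hDE hu hΘpb
  -- `biprod.desc f' v` is a deflation (pullback of `g` along `g'`)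
  have hqcomm : (biprod.desc f' v : X' ⊞ Y ⟶ Y') ≫ g' = biprod.snd ≫ g := by
    apply biprod.hom_ext'
    · simp [hfg']
    · simp [hsq₂]
  have hqpb : IsPullback (biprod.desc f' v) (biprod.snd : X' ⊞ Y ⟶ Y) g' g := by
    refine IsPullback.of_isLimit (PullbackCone.IsLimit.mk hqcomm (fun s => ?_)
      (fun s => ?_) (fun s => ?_) (fun s m hm₁ hm₂ => ?_)
    )
    · -- lift
      have hcz : (s.fst - s.snd ≫ v) ≫ g' = 0 := by
        rw [Preadditive.sub_comp, Category.assoc, ← hsq₂, s.condition, sub_self]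
      exact biprod.lift ((KernelFork.IsLimit.lift' hfk' _ hcz).1) s.snd
    · -- fac_left
      have hc := (KernelFork.IsLimit.lift' hfk' _
        (show (s.fst - s.snd ≫ v) ≫ g' = 0 by
          rw [Preadditive.sub_comp, Category.assoc, ← hsq₂, s.condition, sub_self])).2
      simp only [Fork.ι_ofι] at hc
      rw [biprod.lift_desc, hc]
      abel
    · simp
    · -- uniq
      have hdec : m ≫ biprod.desc f' v = (m ≫ biprod.fst) ≫ f' + (m ≫ biprod.snd) ≫ v := by
        have hm : m = (m ≫ biprod.fst) ≫ biprod.inl + (m ≫ biprod.snd) ≫ biprod.inr := by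
          rw [Category.assoc, Category.assoc, ← Preadditive.comp_add, biprod.total,
            Category.comp_id]
        conv_lhs => rw [hm]
        simp [Preadditive.add_comp]
      have hc := (KernelFork.IsLimit.lift' hfk' _
        (show (s.fst - s.snd ≫ v) ≫ g' = 0 by
          rw [Preadditive.sub_comp, Category.assoc, ← hsq₂, s.condition, sub_self])).2
      simp only [Fork.ι_ofι] at hc
      apply biprod.hom_ext
      · rw [biprod.lift_fst, ← cancel_mono f', hc]
        have : (m ≫ biprod.fst) ≫ f' = s.fst - (m ≫ biprod.snd) ≫ v := by
          rw [eq_sub_iff_add_eq, ← hdec, hm₁]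
        rw [this, hm₂]
      · simpa using hm₂
  have hgdefl : S.IsDeflation g := ⟨X, f, htop⟩
  have hq : S.IsDeflation (biprod.desc f' v) :=
    deflation_of_isPullback S hDE hgdefl hqpb.flip
  -- the composite equals `biprod.desc f (𝟙 Y) ≫ v`
  have hkey : biprod.map u (𝟙 Y) ≫ biprod.desc f' v = biprod.desc f (𝟙 Y) ≫ v := by
    apply biprod.hom_ext'
    · simp [← hsq₁]
    · simp
  have hcomp : S.IsDeflation (biprod.desc f (𝟙 Y) ≫ v) := by
    rw [← hkey]; exact hDE.R1 hΘ hq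
  exact hR3 (biprod.desc f (𝟙 Y)) v hHasKer hcomp

end DeflationHelpers

/-- Let `E` be a strongly deflation-exact category and consider a morphism of
conflations `(u, v, w)`.  (1) If `w` is an isomorphism, then `u` is a deflation if
and only if `v` is a deflation.  (2) If `u` and `w` are deflations, then so is `v`. -/
theorem deflation_lemma {C : Type u} [Category.{v} C] [Preadditive C] [HasZeroObject C]
    [HasFiniteBiproducts C] (S : ConflationStruct C)
    (hDE : S.IsDeflationExact) (hR3 : S.AxiomR3)
    {X Y Z X' Y' Z' : C}
    (f : X ⟶ Y) (g : Y ⟶ Z) (f' : X' ⟶ Y') (g' : Y' ⟶ Z')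
    (u : X ⟶ X') (v : Y ⟶ Y') (w : Z ⟶ Z')
    (htop : S.IsConflation f g) (hbot : S.IsConflation f' g')
    (hsq₁ : f ≫ v = u ≫ f') (hsq₂ : g ≫ w = v ≫ g') :
    (IsIso w → (S.IsDeflation u ↔ S.IsDeflation v)) ∧
    (S.IsDeflation u → S.IsDeflation w → S.IsDeflation v) := by
  have part2 : S.IsDeflation u → S.IsDeflation w → S.IsDeflation v := by
    intro hu hw
    obtain ⟨hfg, ⟨hfk⟩, -⟩ := S.kernelCokernel htop
    obtain ⟨hfg', ⟨hfk'⟩, -⟩ := S.kernelCokernel hbot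
    have monof' : Mono f' := ⟨fun a b hab => Fork.IsLimit.hom_ext hfk' (by simpa using hab)⟩
    -- pull back g' along w
    obtain ⟨P, q₁, q₂, hpb, hq₂⟩ := hDE.R2 ⟨X', f', hbot⟩ w
    set t : Y ⟶ P := hpb.lift v g hsq₂.symm with ht
    have htq₁ : t ≫ q₁ = v := hpb.lift_fst _ _ _
    have htq₂ : t ≫ q₂ = g := hpb.lift_snd _ _ _
    have hf'w : f' ≫ g' = (0 : X' ⟶ Z) ≫ w := by rw [hfg', zero_comp]
    set j : X' ⟶ P := hpb.lift f' 0 hf'w with hj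
    have hjq₁ : j ≫ q₁ = f' := hpb.lift_fst _ _ _
    have hjq₂ : j ≫ q₂ = 0 := hpb.lift_snd _ _ _
    -- (j, q₂) is a conflation
    obtain ⟨K, k₀, hconf₂⟩ := hq₂
    obtain ⟨hkq, ⟨hkk⟩, -⟩ := S.kernelCokernel hconf₂
    have monoj : Mono j := by
      have : Mono (j ≫ q₁) := by rw [hjq₁]; infer_instance
      exact mono_of_mono j q₁
    have hJlim : IsLimit (KernelFork.ofι j hjq₂) := by
      refine KernelFork.IsLimit.ofι' _ hjq₂ (fun {T} a ha => ?_)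
      have hag : (a ≫ q₁) ≫ g' = 0 := by
        rw [Category.assoc, hpb.w, ← Category.assoc, ha, zero_comp]
      obtain ⟨b, hb⟩ := KernelFork.IsLimit.lift' hfk' _ hag
      simp only [Fork.ι_ofι] at hb
      refine ⟨b, hpb.hom_ext ?_ ?_⟩
      · rw [Category.assoc, hjq₁, hb]
      · rw [Category.assoc, hjq₂, comp_zero, ha]
    have he : (IsLimit.conePointUniqueUpToIso hkk hJlim).hom ≫ j = k₀ := by
      simpa [Fork.app_zero_eq_ι] using
        IsLimit.conePointUniqueUpToIso_hom_comp hkk hJlim WalkingParallelPair.zero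
    have hconfj : S.IsConflation j q₂ :=
      S.iso_closed (IsLimit.conePointUniqueUpToIso hkk hJlim) (Iso.refl P) (Iso.refl Z)
        (by simpa using he.symm) (by simp) hconf₂
    -- morphism of conflations (u, t, 𝟙 Z)
    have hsq₁' : f ≫ t = u ≫ j := by
      refine hpb.hom_ext ?_ ?_
      · rw [Category.assoc, Category.assoc, htq₁, hjq₁, hsq₁]
      · rw [Category.assoc, Category.assoc, htq₂, hjq₂, hfg, comp_zero]
    have ht' : S.IsDeflation t :=
      deflation_core S hDE hR3 htop hconfj hsq₁' htq₂.symm hu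
    -- q₁ is a deflation (pullback of w along g')
    have hq₁ : S.IsDeflation q₁ := deflation_of_isPullback S hDE hw hpb.flip
    rw [← htq₁]
    exact hDE.R1 ht' hq₁
  refine ⟨fun hw => ⟨fun hu => part2 hu (deflation_of_isIso S hDE w), fun hv => ?_⟩, part2⟩
  -- v deflation → u deflation, when w is iso: the left square is a pullback
  obtain ⟨hfg, ⟨hfk⟩, -⟩ := S.kernelCokernel htop
  obtain ⟨hfg', ⟨hfk'⟩, -⟩ := S.kernelCokernel hbot
  have monof : Mono f := ⟨fun a b hab => Fork.IsLimit.hom_ext hfk (by simpa using hab)⟩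
  have monof' : Mono f' := ⟨fun a b hab => Fork.IsLimit.hom_ext hfk' (by simpa using hab)⟩
  have hpbu : IsPullback f u v f' := by
    refine IsPullback.of_isLimit (PullbackCone.IsLimit.mk hsq₁ (fun s => ?_)
      (fun s => ?_) (fun s => ?_) (fun s m hm₁ hm₂ => ?_))
    · have hsg : s.fst ≫ g = 0 := by
        rw [← cancel_mono w, Category.assoc, hsq₂, ← Category.assoc, s.condition,
          Category.assoc, hfg', comp_zero, zero_comp]
      exact (KernelFork.IsLimit.lift' hfk _ hsg).1
    · have hsg : s.fst ≫ g = 0 := by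
        rw [← cancel_mono w, Category.assoc, hsq₂, ← Category.assoc, s.condition,
          Category.assoc, hfg', comp_zero, zero_comp]
      simpa using (KernelFork.IsLimit.lift' hfk _ hsg).2
    · have hsg : s.fst ≫ g = 0 := by
        rw [← cancel_mono w, Category.assoc, hsq₂, ← Category.assoc, s.condition,
          Category.assoc, hfg', comp_zero, zero_comp]
      have hc := (KernelFork.IsLimit.lift' hfk _ hsg).2
      simp only [Fork.ι_ofι] at hc
      rw [← cancel_mono f', Category.assoc, ← hsq₁, ← Category.assoc, hc, s.condition]
    · have hsg : s.fst ≫ g = 0 := by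
        rw [← cancel_mono w, Category.assoc, hsq₂, ← Category.assoc, s.condition,
          Category.assoc, hfg', comp_zero, zero_comp]
      have hc := (KernelFork.IsLimit.lift' hfk _ hsg).2
      simp only [Fork.ι_ofι] at hc
      rw [← cancel_mono f, hm₁, hc]
  exact deflation_of_isPullback S hDE hv hpbu
end

section
/- Let E be a deflation-exact category. Consider a commutative diagram with rows X →f Y →g Z and X' →f' Y' →g' Z, where the top row is a conflation, the vertical morphisms are u : X → X', a deflation v : Y → Y', and the identity on Z, and where f' is a monomorphism. If g'∘f' = 0, then f' is a kernel of g'. -/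
open CategoryTheory CategoryTheory.Limits ZeroObject

attribute [local instance] CategoryTheory.Limits.hasBinaryBiproducts_of_finite_biproducts

universe v u

/-- Let `E` be a deflation-exact category.  Given a commutative diagram whose top
row `X ↣ Y ↠ Z` is a conflation, with vertical morphisms `u : X ⟶ X'`, a
deflation `v : Y ⟶ Y'` and the identity on `Z`, if `f'` is a monomorphism and
`f' ≫ g' = 0`, then `f'` is a kernel of `g'`. -/
theorem kernel_lemma {C : Type u} [Category.{v} C] [Preadditive C] [HasZeroObject C]
    [HasFiniteBiproducts C] (S : ConflationStruct C)
    (hDE : S.IsDeflationExact)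
    {X Y Z X' Y' : C}
    (f : X ⟶ Y) (g : Y ⟶ Z) (f' : X' ⟶ Y') (g' : Y' ⟶ Z)
    (u : X ⟶ X') (v : Y ⟶ Y')
    (htop : S.IsConflation f g) (hv : S.IsDeflation v)
    (hmono : Mono f')
    (hsq₁ : f ≫ v = u ≫ f') (hsq₂ : g = v ≫ g')
    (hzero : f' ≫ g' = 0) :
    IsKernelOf f' g' := by
  obtain ⟨hfg, ⟨hker⟩, _⟩ := S.kernelCokernel htop
  have key : ∀ {W : C} (t : W ⟶ Y'), t ≫ g' = 0 → ∃ l : W ⟶ X', l ≫ f' = t := by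
    intro W t ht
    obtain ⟨P, p₁, p₂, pb, hp₂⟩ := hDE.R2 hv t
    have hp₁g : p₁ ≫ g = 0 := by
      rw [hsq₂, ← Category.assoc, pb.w, Category.assoc, ht, comp_zero]
    obtain ⟨k, hk⟩ := KernelFork.IsLimit.lift' hker p₁ hp₁g
    simp only [Fork.ι_ofι] at hk
    obtain ⟨K, f₀, hconf⟩ := hp₂
    obtain ⟨hfp, _, ⟨hcoker⟩⟩ := S.kernelCokernel hconf
    have hz : f₀ ≫ (k ≫ u) = 0 := by
      rw [← cancel_mono f']
      have : (k ≫ u) ≫ f' = p₂ ≫ t := by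
        rw [Category.assoc, ← hsq₁, ← Category.assoc, hk, pb.w]
      rw [Category.assoc, this, ← Category.assoc, hfp, zero_comp, zero_comp]
    obtain ⟨l, hl⟩ := CokernelCofork.IsColimit.desc' hcoker (k ≫ u) hz
    refine ⟨l, ?_⟩
    have hepi : Epi p₂ := epi_of_isColimit_cofork hcoker
    rw [← cancel_epi p₂, ← Category.assoc]
    simp only [Cofork.π_ofπ] at hl
    rw [hl, Category.assoc, ← hsq₁, ← Category.assoc, hk, pb.w]
  refine ⟨hzero, ⟨KernelFork.IsLimit.ofι f' hzero
    (fun {W} t ht => (key t ht).choose)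
    (fun {W} t ht => (key t ht).choose_spec)
    (fun {W} t ht m hm => ?_)⟩⟩
  rw [← cancel_mono f', hm, (key t ht).choose_spec]
end

section
/- Let f : X → Y be a morphism in a deflation-exact category E. The following are equivalent: (1) f = m∘e where e is a deflation and m is a monomorphism; (2) f admits a kernel whose inclusion morphism ker(f) → X is an inflation. In this case, the deflation in the factorization is the cokernel morphism e : X ↠ X/ker(f) of the inflation ker(f) ↣ X. -/
open CategoryTheory CategoryTheory.Limits ZeroObject

attribute [local instance] CategoryTheory.Limits.hasBinaryBiproducts_of_finite_biproducts

universe v u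

/-- Let `f : X ⟶ Y` be a morphism in a deflation-exact category `E`.  The following
are equivalent: (1) `f = m ∘ e` with `e` a deflation and `m` a monomorphism;
(2) `f` admits a kernel `k : ker f ⟶ X` which is an inflation.  In this case the
deflation in the factorization is the cokernel `e : X ↠ X/ker f` of the inflation
`ker f ↣ X`, i.e. for any conflation `ker f ↣ X ↠ Q` the deflation `X ↠ Q`
followed by a monomorphism is such a factorization of `f`. -/
theorem deflation_mono_factorization {C : Type u} [Category.{v} C] [Preadditive C]
    [HasZeroObject C] [HasFiniteBiproducts C] (S : ConflationStruct C)
    (hDE : S.IsDeflationExact)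
    {X Y : C} (f : X ⟶ Y) :
    ((∃ (I : C) (e : X ⟶ I) (m : I ⟶ Y), S.IsDeflation e ∧ Mono m ∧ e ≫ m = f) ↔
      (∃ (K : C) (k : K ⟶ X), IsKernelOf k f ∧ S.IsInflation k)) ∧
    (∀ (K Q : C) (k : K ⟶ X) (e : X ⟶ Q), IsKernelOf k f → S.IsConflation k e →
      ∃ m : Q ⟶ Y, Mono m ∧ e ≫ m = f) := by
  have key : ∀ (K Q : C) (k : K ⟶ X) (e : X ⟶ Q), IsKernelOf k f → S.IsConflation k e →
      ∃ m : Q ⟶ Y, Mono m ∧ e ≫ m = f := by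
    intro K Q k e hk hc
    obtain ⟨wkf, ⟨hkf⟩⟩ := hk
    obtain ⟨wke, ⟨hker⟩, ⟨hcoker⟩⟩ := S.kernelCokernel hc
    obtain ⟨m, hm⟩ := CokernelCofork.IsColimit.desc' hcoker f wkf
    refine ⟨m, ?_, hm⟩
    refine Preadditive.mono_of_cancel_zero _ ?_
    intro T g hg
    obtain ⟨P, p₁, p₂, hpb, hp₂⟩ := hDE.R2 ⟨K, k, hc⟩ g
    obtain ⟨K', k', hc'⟩ := hp₂
    obtain ⟨wk', -, ⟨hcoker'⟩⟩ := S.kernelCokernel hc'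
    have hepi : Epi p₂ := ⟨fun a b hab => Cofork.IsColimit.hom_ext hcoker' hab⟩
    have h1 : p₁ ≫ f = 0 := by
      simp only [← hm, Cofork.π_ofπ, ← Category.assoc, hpb.w]
      rw [Category.assoc, hg, comp_zero]
    obtain ⟨u, hu⟩ := KernelFork.IsLimit.lift' hkf p₁ h1
    have h2 : p₂ ≫ g = 0 := by
      rw [← hpb.w, ← hu]
      simp [wke]
    exact (cancel_epi p₂).1 (by rw [h2, comp_zero])
  refine ⟨⟨?_, ?_⟩, key⟩
  · rintro ⟨I, e, m, ⟨K, k, hc⟩, hmono, heq⟩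
    obtain ⟨wke, ⟨hker⟩, -⟩ := S.kernelCokernel hc
    have wkf : k ≫ f = 0 := by rw [← heq, ← Category.assoc, wke, zero_comp]
    refine ⟨K, k, ⟨wkf, ⟨?_⟩⟩, ⟨I, e, hc⟩⟩
    exact isKernelCompMono hker m heq.symm
  · rintro ⟨K, k, hk, ⟨Q, e, hc⟩⟩
    obtain ⟨m, hmono, hme⟩ := key K Q k e hk hc
    exact ⟨Q, e, m, ⟨K, k, hc⟩, hmono, hme⟩
end

section
/- Let E be a deflation-exact category. The following are equivalent: (1) E satisfies axiom (R3+); (2) E is weakly idempotent complete and satisfies axiom (R3); (3) E is weakly idempotent complete and satisfies axiom (R3−). -/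
open CategoryTheory CategoryTheory.Limits ZeroObject

attribute [local instance] CategoryTheory.Limits.hasBinaryBiproducts_of_finite_biproducts

universe v u

section AuxLemmas

variable {C : Type u} [Category.{v} C] [Preadditive C] [HasZeroObject C]
  [HasFiniteBiproducts C] (S : ConflationStruct C)

/-- An isomorphism composed with a deflation is a deflation. -/
lemma aux_iso_comp_deflation {W Y Z : C} (ψ : W ⟶ Y) [IsIso ψ] {g : Y ⟶ Z}
    (hg : S.IsDeflation g) : S.IsDeflation (ψ ≫ g) := by
  obtain ⟨X, f, hc⟩ := hg
  exact ⟨X, f ≫ inv ψ, S.iso_closed (Iso.refl X) (asIso ψ).symm (Iso.refl Z)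
    (by simp) (by simp) hc⟩

/-- In a deflation-exact category, every identity morphism is a deflation. -/
lemma aux_id_deflation (hDE : S.IsDeflationExact) (Y : C) : S.IsDeflation (𝟙 Y) := by
  obtain ⟨P, p₁, p₂, hpb, hp₂⟩ := hDE.R2 hDE.R0 (0 : Y ⟶ (0 : C))
  have hl : (0 : Y ⟶ (0 : C)) ≫ 𝟙 (0 : C) = 𝟙 Y ≫ (0 : Y ⟶ (0 : C)) := by simp
  haveI : IsIso p₂ := by
    refine ⟨hpb.lift 0 (𝟙 Y) hl, ?_, hpb.lift_snd _ _ _⟩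
    apply hpb.hom_ext
    · exact Subsingleton.elim _ _
    · simp [hpb.lift_snd]
  have := aux_iso_comp_deflation S (inv p₂) hp₂
  rwa [IsIso.inv_hom_id] at this

/-- Every deflation has a kernel. -/
lemma aux_deflation_hasKernel {Y Z : C} {g : Y ⟶ Z} (hg : S.IsDeflation g) :
    HasKernel g := by
  obtain ⟨X, f, hc⟩ := hg
  obtain ⟨w, ⟨hk⟩, -⟩ := S.kernelCokernel hc
  exact HasLimit.mk ⟨_, hk⟩

/-- If `f ≫ g` is a deflation and the category is weakly idempotent complete, then
`g` has a kernel. -/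
lemma aux_kernel_of_comp (hDE : S.IsDeflationExact) (hW : WeaklyIdempotentComplete C)
    {X Y Z : C} (f : X ⟶ Y) (g : Y ⟶ Z) (hfg : S.IsDeflation (f ≫ g)) :
    ∃ (K : C) (k : K ⟶ Y), IsKernelOf k g := by
  obtain ⟨P, p₁, p₂, hpb, hp₂⟩ := hDE.R2 hfg g
  -- `p₁` is a retraction, with section induced by `(𝟙 X, f)`.
  haveI : HasKernel p₁ :=
    hW p₁ ⟨hpb.lift (𝟙 X) f (by simp), hpb.lift_fst _ _ _⟩
  have w : (kernel.ι p₁ ≫ p₂) ≫ g = 0 := by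
    rw [Category.assoc, ← hpb.w, kernel.condition_assoc, zero_comp]
  refine ⟨kernel p₁, kernel.ι p₁ ≫ p₂, w, ⟨?_⟩⟩
  refine KernelFork.IsLimit.ofι _ _
    (fun {A} a ha => kernel.lift p₁ (hpb.lift 0 a (by simp [ha])) (hpb.lift_fst _ _ _))
    (fun {A} a ha => by rw [← Category.assoc, kernel.lift_ι, hpb.lift_snd])
    (fun {A} a ha m hm => ?_)
  rw [← cancel_mono (kernel.ι p₁), kernel.lift_ι]
  apply hpb.hom_ext
  · simp [kernel.condition, hpb.lift_fst]
  · simpa [hpb.lift_snd] using hm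

/-- The kernel of `biprod.desc g (-h)` gives a pullback of `g` and `h`. -/
lemma aux_isPullback_of_kernel {Y W Z K : C} (g : Y ⟶ Z) (h : W ⟶ Z) (k : K ⟶ Y ⊞ W)
    (w : k ≫ biprod.desc g (-h) = 0) (hk : IsLimit (KernelFork.ofι k w)) :
    IsPullback (k ≫ biprod.fst) (k ≫ biprod.snd) g h := by
  have hdesc : biprod.desc g (-h) = biprod.fst ≫ g - biprod.snd ≫ h := by
    apply biprod.hom_ext' <;> simp [Preadditive.comp_sub]
  have hcomm : (k ≫ biprod.fst) ≫ g = (k ≫ biprod.snd) ≫ h := by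
    have := w
    rw [hdesc, Preadditive.comp_sub, sub_eq_zero] at this
    simpa using this
  have hcond : ∀ (s : PullbackCone g h), biprod.lift s.fst s.snd ≫ biprod.desc g (-h) = 0 := by
    intro s
    rw [hdesc, Preadditive.comp_sub, sub_eq_zero]
    simpa using s.condition
  refine IsPullback.of_isLimit (PullbackCone.IsLimit.mk hcomm
    (fun s => (KernelFork.IsLimit.lift' hk (biprod.lift s.fst s.snd) (hcond s)).1)
    (fun s => ?_) (fun s => ?_) (fun s m hm₁ hm₂ => ?_)
    )
  · have hspec := (KernelFork.IsLimit.lift' hk (biprod.lift s.fst s.snd) (hcond s)).2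
    simp only [Fork.ι_ofι] at hspec
    rw [← Category.assoc]; rw [hspec]; simp
  · have hspec := (KernelFork.IsLimit.lift' hk (biprod.lift s.fst s.snd) (hcond s)).2
    simp only [Fork.ι_ofι] at hspec
    rw [← Category.assoc]; rw [hspec]; simp
  · have hspec := (KernelFork.IsLimit.lift' hk (biprod.lift s.fst s.snd) (hcond s)).2
    apply Fork.IsLimit.hom_ext hk
    rw [hspec]
    simp only [Fork.ι_ofι]
    apply biprod.hom_ext
    · simpa using hm₁
    · simpa using hm₂

end AuxLemmas

/-- Let `E` be a deflation-exact category.  The following are equivalent: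
(1) `E` satisfies axiom (R3+); (2) `E` is weakly idempotent complete and satisfies
axiom (R3); (3) `E` is weakly idempotent complete and satisfies axiom (R3−). -/
theorem weakly_idempotent_complete_R3 {C : Type u} [Category.{v} C] [Preadditive C]
    [HasZeroObject C] [HasFiniteBiproducts C] (S : ConflationStruct C)
    (hDE : S.IsDeflationExact) :
    (S.AxiomR3plus ↔ (WeaklyIdempotentComplete C ∧ S.AxiomR3)) ∧
    (S.AxiomR3plus ↔ (WeaklyIdempotentComplete C ∧ S.AxiomR3minus)) := by
  have plus_to_wic : S.AxiomR3plus → WeaklyIdempotentComplete C := by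
    intro h3 X Y r hr
    obtain ⟨s, hs⟩ := hr
    have hdef : S.IsDeflation (s ≫ r) := by
      rw [hs]; exact aux_id_deflation S hDE Y
    exact aux_deflation_hasKernel S (h3 s r hdef)
  constructor
  · constructor
    · intro h3
      refine ⟨plus_to_wic h3, fun A B Q i p _ hip => h3 i p hip⟩
    · rintro ⟨hW, h3⟩ X Y Z f g hfg
      obtain ⟨K, k, wk, ⟨hk⟩⟩ := aux_kernel_of_comp S hDE hW f g hfg
      haveI : HasKernel g := HasLimit.mk ⟨_, hk⟩
      exact h3 f g this hfg
  · constructor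
    · intro h3
      refine ⟨plus_to_wic h3, fun X Y Z f g hfg _ => h3 f g hfg⟩
    · rintro ⟨hW, h3⟩ X Y Z f g hfg
      refine h3 f g hfg ?_
      intro W h
      have hcomp : S.IsDeflation ((f ≫ biprod.inl) ≫ biprod.desc g (-h)) := by
        simpa using hfg
      obtain ⟨K, k, wk, ⟨hk⟩⟩ := aux_kernel_of_comp S hDE hW _ _ hcomp
      exact ⟨K, k ≫ biprod.fst, k ≫ biprod.snd,
        aux_isPullback_of_kernel g h k wk hk⟩
end

section
/- Let E be a deflation-exact category satisfying axiom (R0*). Then: (1) E satisfies axiom (R3−) if and only if for every morphism g : Y → Z admitting all pullbacks, whenever (0, g) : Y' ⊕ Y → Z is a deflation for some object Y', the morphism g is a deflation; (2) E satisfies axiom (R3) if and only if for every morphism g : Y → Z admitting a kernel, whenever (0, g) : Y' ⊕ Y → Z is a deflation for some object Y', the morphism g is a deflation; (3) E satisfies axiom (R3+) if and only if for every morphism g : Y → Z, whenever (0, g) : Y' ⊕ Y → Z is a deflation for some object Y', the morphism g is a deflation. -/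
open CategoryTheory CategoryTheory.Limits ZeroObject

attribute [local instance] CategoryTheory.Limits.hasBinaryBiproducts_of_finite_biproducts

universe v u

namespace ConflationStruct

variable {C : Type u} [Category.{v} C] [Preadditive C] [HasZeroObject C]
  [HasFiniteBiproducts C] (S : ConflationStruct C)

lemma defl_iso_comp {Y' Y Z : C} (h : Y' ⟶ Y) [IsIso h] {g : Y ⟶ Z}
    (hg : S.IsDeflation g) : S.IsDeflation (h ≫ g) := by
  obtain ⟨W, k, hk⟩ := hg
  exact ⟨W, k ≫ inv h, S.iso_closed (Iso.refl W) (asIso h).symm (Iso.refl Z)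
    (by simp) (by simp) hk⟩

lemma defl_of_pullback {P Y Z W : C} {g : Y ⟶ Z} {h : W ⟶ Z} {p₁ : P ⟶ Y} {p₂ : P ⟶ W}
    (hDE : S.IsDeflationExact) (hpb : IsPullback p₁ p₂ g h) (hg : S.IsDeflation g) :
    S.IsDeflation p₂ := by
  obtain ⟨Q, q₁, q₂, hq, hdq⟩ := hDE.R2 hg h
  have : p₂ = (hpb.isoIsPullback _ _ hq).hom ≫ q₂ := by
    rw [hpb.isoIsPullback_hom_snd]
  rw [this]
  exact S.defl_iso_comp _ hdq

lemma defl_fst (hDE : S.IsDeflationExact) (hR0s : S.AxiomR0star) (Z Y : C) :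
    S.IsDeflation (biprod.fst : Z ⊞ Y ⟶ Z) := by
  have hpb : IsPullback (biprod.snd : Z ⊞ Y ⟶ Y) (biprod.fst : Z ⊞ Y ⟶ Z)
      (0 : Y ⟶ (0 : C)) (0 : Z ⟶ (0 : C)) := (IsPullback.of_has_biproduct Z Y).flip
  exact S.defl_of_pullback hDE hpb (hR0s Y)

omit [HasZeroObject C] in
lemma isPullback_map_fst {X Z : C} (e : X ⟶ Z) (Y : C) :
    IsPullback (biprod.fst : X ⊞ Y ⟶ X) (biprod.map e (𝟙 Y)) e
      (biprod.fst : Z ⊞ Y ⟶ Z) := by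
  refine IsPullback.of_isLimit' ⟨by simp⟩ ?_
  refine PullbackCone.IsLimit.mk _ (fun s => biprod.lift s.fst (s.snd ≫ biprod.snd))
    (fun s => by simp) (fun s => ?_) (fun s m h1 h2 => ?_)
  · apply biprod.hom_ext <;> simp [s.condition]
  · apply biprod.hom_ext
    · simpa using h1
    · have := h2 =≫ biprod.snd
      simpa using this

lemma defl_map_id {X Z : C} (hDE : S.IsDeflationExact) {e : X ⟶ Z}
    (he : S.IsDeflation e) (Y : C) : S.IsDeflation (biprod.map e (𝟙 Y)) :=
  S.defl_of_pullback hDE (isPullback_map_fst e Y) he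

lemma defl_desc_one (hDE : S.IsDeflationExact) (hR0s : S.AxiomR0star) {Y Z : C}
    (g : Y ⟶ Z) : S.IsDeflation (biprod.desc (𝟙 Z) g) := by
  have hiso : IsIso (biprod.lift (biprod.desc (𝟙 Z) g) (biprod.snd : Z ⊞ Y ⟶ Y)) := by
    refine ⟨biprod.lift (biprod.desc (𝟙 Z) (-g)) biprod.snd, ?_, ?_⟩ <;>
      apply biprod.hom_ext' <;> apply biprod.hom_ext <;>
      simp [Preadditive.comp_add, Preadditive.add_comp]
  have : biprod.desc (𝟙 Z) g
      = biprod.lift (biprod.desc (𝟙 Z) g) (biprod.snd : Z ⊞ Y ⟶ Y) ≫ biprod.fst := by simp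
  rw [this]
  exact S.defl_iso_comp _ (S.defl_fst hDE hR0s Z Y)

lemma defl_desc_of_defl (hDE : S.IsDeflationExact) (hR0s : S.AxiomR0star) {X Y Z : C}
    {e : X ⟶ Z} (he : S.IsDeflation e) (g : Y ⟶ Z) :
    S.IsDeflation (biprod.desc e g) := by
  have : biprod.desc e g = biprod.map e (𝟙 Y) ≫ biprod.desc (𝟙 Z) g := by
    apply biprod.hom_ext' <;> simp
  rw [this]
  exact hDE.R1 (S.defl_map_id hDE he Y) (S.defl_desc_one hDE hR0s g)

/-- Core: if `f ≫ g` is a deflation then `(0, g) : X ⊞ Y ⟶ Z` is a deflation. -/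
lemma defl_desc_zero (hDE : S.IsDeflationExact) (hR0s : S.AxiomR0star) {X Y Z : C}
    (f : X ⟶ Y) (g : Y ⟶ Z) (hfg : S.IsDeflation (f ≫ g)) :
    S.IsDeflation (biprod.desc (0 : X ⟶ Z) g) := by
  have hd := S.defl_desc_of_defl hDE hR0s hfg g
  have hiso : IsIso (biprod.lift (biprod.fst : X ⊞ Y ⟶ X) (biprod.snd - biprod.fst ≫ f)) := by
    refine ⟨biprod.lift biprod.fst (biprod.snd + biprod.fst ≫ f), ?_, ?_⟩ <;>
      apply biprod.hom_ext' <;> apply biprod.hom_ext <;>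
      simp [Preadditive.comp_add, Preadditive.comp_sub, Preadditive.sub_comp,
        Preadditive.add_comp]
  have : biprod.desc (0 : X ⟶ Z) g
      = biprod.lift (biprod.fst : X ⊞ Y ⟶ X) (biprod.snd - biprod.fst ≫ f)
        ≫ biprod.desc (f ≫ g) g := by
    apply biprod.hom_ext' <;>
      simp [Preadditive.sub_comp, Preadditive.comp_sub]
  rw [this]
  exact S.defl_iso_comp _ hd

omit [HasZeroObject C] in
lemma desc_zero_eq {X Y Z : C} (g : Y ⟶ Z) :
    biprod.desc (0 : X ⟶ Z) g = (biprod.snd : X ⊞ Y ⟶ Y) ≫ g := by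
  apply biprod.hom_ext' <;> simp

end ConflationStruct

/-- Characterizations of the obscure axioms via direct summands.  Let `E` be a
deflation-exact category satisfying axiom (R0*).  Then (R3−), (R3) and (R3+) are
respectively equivalent to: whenever `(0, g) : Y' ⊕ Y ⟶ Z` is a deflation and `g`
admits all pullbacks / admits a kernel / (no condition), `g` is a deflation. -/
theorem obscure_axioms_characterizations_with_summands {C : Type u} [Category.{v} C]
    [Preadditive C] [HasZeroObject C] [HasFiniteBiproducts C] (S : ConflationStruct C)
    (hDE : S.IsDeflationExact) (hR0s : S.AxiomR0star) :
    (S.AxiomR3minus ↔ ∀ (Y Z : C) (g : Y ⟶ Z), HasAllPullbacksAlong g →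
      (∃ Y' : C, S.IsDeflation (biprod.desc (0 : Y' ⟶ Z) g)) → S.IsDeflation g) ∧
    (S.AxiomR3 ↔ ∀ (Y Z : C) (g : Y ⟶ Z), HasKernel g →
      (∃ Y' : C, S.IsDeflation (biprod.desc (0 : Y' ⟶ Z) g)) → S.IsDeflation g) ∧
    (S.AxiomR3plus ↔ ∀ (Y Z : C) (g : Y ⟶ Z),
      (∃ Y' : C, S.IsDeflation (biprod.desc (0 : Y' ⟶ Z) g)) → S.IsDeflation g) := by
  
  refine ⟨⟨?_, ?_⟩, ⟨?_, ?_⟩, ?_, ?_⟩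
  · rintro hax Y Z g hpb ⟨Y', hd⟩
    rw [ConflationStruct.desc_zero_eq] at hd
    exact hax biprod.snd g hd hpb
  · rintro hyp X Y Z f g hfg hpb
    exact hyp Y Z g hpb ⟨X, S.defl_desc_zero hDE hR0s f g hfg⟩
  · rintro hax Y Z g hk ⟨Y', hd⟩
    rw [ConflationStruct.desc_zero_eq] at hd
    exact hax biprod.snd g hk hd
  · rintro hyp A B Q i p hk hip
    exact hyp B Q p hk ⟨A, S.defl_desc_zero hDE hR0s i p hip⟩
  · rintro hax Y Z g ⟨Y', hd⟩
    rw [ConflationStruct.desc_zero_eq] at hd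
    exact hax biprod.snd g hd
  · rintro hyp X Y Z f g hfg
    exact hyp Y Z g ⟨X, S.defl_desc_zero hDE hR0s f g hfg⟩
end

section
/- Let E be a deflation-exact category satisfying axiom (R3−). Let f : Y → Z and g : Y' → Z' be morphisms such that the direct sum morphism f ⊕ g : Y ⊕ Y' → Z ⊕ Z' is a deflation. If f admits all pullbacks, then f is a deflation. -/
open CategoryTheory CategoryTheory.Limits ZeroObject

attribute [local instance] CategoryTheory.Limits.hasBinaryBiproducts_of_finite_biproducts

universe v u

/-- Let `E` be a deflation-exact category satisfying axiom (R3−).  If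
`f ⊕ g : Y ⊕ Y' ⟶ Z ⊕ Z'` is a deflation and `f` admits all pullbacks, then `f`
is a deflation. -/
theorem R3minus_direct_summands {C : Type u} [Category.{v} C] [Preadditive C]
    [HasZeroObject C] [HasFiniteBiproducts C] (S : ConflationStruct C)
    (hDE : S.IsDeflationExact) (hR3m : S.AxiomR3minus)
    {Y Z Y' Z' : C} (f : Y ⟶ Z) (g : Y' ⟶ Z')
    (hsum : S.IsDeflation (biprod.map f g))
    (hpb : HasAllPullbacksAlong f) :
    S.IsDeflation f := by
  obtain ⟨P, p₁, p₂, hPB, hdefl⟩ := hDE.R2 hsum (biprod.inl : Z ⟶ Z ⊞ Z')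
  have key : p₂ = (p₁ ≫ biprod.fst) ≫ f := by
    have h1 : p₁ ≫ biprod.map f g = p₂ ≫ biprod.inl := hPB.w
    calc p₂ = p₂ ≫ biprod.inl ≫ biprod.fst := by simp
    _ = (p₁ ≫ biprod.map f g) ≫ biprod.fst := by rw [← Category.assoc, ← h1]
    _ = (p₁ ≫ biprod.fst) ≫ f := by simp
  exact hR3m (p₁ ≫ biprod.fst) f (key ▸ hdefl) hpb
end

section
/- Let E be a deflation-exact category satisfying axiom (R3+). Given a commutative diagram whose rows A₁ ↣ A₂ ↠ A₃ and A₁ ↣ B₂ ↠ B₃ are conflations, whose left vertical morphism is the identity on A₁, and with vertical morphisms f₂ : A₂ → B₂ and f₃ : A₃ → B₃, the morphism f₂ is admissible if and only if f₃ is admissible. -/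
open CategoryTheory CategoryTheory.Limits ZeroObject

attribute [local instance] CategoryTheory.Limits.hasBinaryBiproducts_of_finite_biproducts

universe v u

section Helpers

variable {C : Type u} [Category.{v} C] [Preadditive C] [HasZeroObject C]
  [HasFiniteBiproducts C]

lemma kernelLiftAux {X Y Z W : C} {f : X ⟶ Y} {g : Y ⟶ Z} {w : f ≫ g = 0}
    (h : IsLimit (KernelFork.ofι f w)) (k : W ⟶ Y) (hk : k ≫ g = 0) :
    ∃ l : W ⟶ X, l ≫ f = k :=
  ⟨(KernelFork.IsLimit.lift' h k hk).1, by
    simpa using (KernelFork.IsLimit.lift' h k hk).2⟩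

lemma cokernelDescAux {X Y Z W : C} {f : X ⟶ Y} {g : Y ⟶ Z} {w : f ≫ g = 0}
    (h : IsColimit (CokernelCofork.ofπ g w)) (k : Y ⟶ W) (hk : f ≫ k = 0) :
    ∃ l : Z ⟶ W, g ≫ l = k :=
  ⟨(CokernelCofork.IsColimit.desc' h k hk).1, by
    simpa using (CokernelCofork.IsColimit.desc' h k hk).2⟩

lemma monoOfKernelAux {X Y Z : C} {f : X ⟶ Y} {g : Y ⟶ Z} {w : f ≫ g = 0}
    (h : IsLimit (KernelFork.ofι f w)) : Mono f := by
  simpa using mono_of_isLimit_fork h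

lemma epiOfCokernelAux {X Y Z : C} {f : X ⟶ Y} {g : Y ⟶ Z} {w : f ≫ g = 0}
    (h : IsColimit (CokernelCofork.ofπ g w)) : Epi g := by
  simpa using epi_of_isColimit_cofork h

end Helpers

/-- Let `E` be a deflation-exact category satisfying axiom (R3+).  Given a
commutative diagram whose rows `A₁ ↣ A₂ ↠ A₃` and `A₁ ↣ B₂ ↠ B₃` are conflations
and whose left vertical morphism is the identity on `A₁`, the morphism `f₂` is
admissible if and only if `f₃` is admissible. -/
theorem admissible_stable_equal_left {C : Type u} [Category.{v} C] [Preadditive C]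
    [HasZeroObject C] [HasFiniteBiproducts C] (S : ConflationStruct C)
    (hDE : S.IsDeflationExact) (hR3p : S.AxiomR3plus)
    {A₁ A₂ A₃ B₂ B₃ : C}
    (i₁ : A₁ ⟶ A₂) (p₁ : A₂ ⟶ A₃) (i₂ : A₁ ⟶ B₂) (p₂ : B₂ ⟶ B₃)
    (f₂ : A₂ ⟶ B₂) (f₃ : A₃ ⟶ B₃)
    (hrow₁ : S.IsConflation i₁ p₁) (hrow₂ : S.IsConflation i₂ p₂)
    (hsq₁ : i₁ ≫ f₂ = i₂) (hsq₂ : p₁ ≫ f₃ = f₂ ≫ p₂) :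
    S.IsAdmissible f₂ ↔ S.IsAdmissible f₃ := by
  obtain ⟨hzero₁, ⟨hker₁⟩, ⟨hcoker₁⟩⟩ := S.kernelCokernel hrow₁
  obtain ⟨hzero₂, ⟨hker₂⟩, ⟨hcoker₂⟩⟩ := S.kernelCokernel hrow₂
  have hp₁ : S.IsDeflation p₁ := ⟨A₁, i₁, hrow₁⟩
  have hp₂ : S.IsDeflation p₂ := ⟨A₁, i₂, hrow₂⟩
  constructor
  · -- f₂ admissible → f₃ admissible
    rintro ⟨I, e, m, he, hm, hcompf₂⟩
    obtain ⟨Q, c, hconf_m⟩ := hm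
    obtain ⟨hmc, ⟨hker_m⟩, -⟩ := S.kernelCokernel hconf_m
    have hmono_m : Mono m := monoOfKernelAux hker_m
    have hc : S.IsDeflation c := ⟨I, m, hconf_m⟩
    have hepi_p₁ : Epi p₁ := epiOfCokernelAux hcoker₁
    have hi₂c : i₂ ≫ c = 0 := by
      rw [← hsq₁, ← hcompf₂, Category.assoc, Category.assoc, hmc, comp_zero, comp_zero]
    obtain ⟨g, hg_fac⟩ := cokernelDescAux hcoker₂ c hi₂c
    have hg : S.IsDeflation g := hR3p p₂ g (by rw [hg_fac]; exact hc)
    obtain ⟨J, n₃, hconf_g⟩ := hg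
    obtain ⟨hng, ⟨hker_g⟩, -⟩ := S.kernelCokernel hconf_g
    have hmono_n₃ : Mono n₃ := monoOfKernelAux hker_g
    have hmpg : (m ≫ p₂) ≫ g = 0 := by rw [Category.assoc, hg_fac, hmc]
    obtain ⟨v, hv_fac⟩ := kernelLiftAux hker_g (m ≫ p₂) hmpg
    obtain ⟨P, π₁, π₂, hpb, hπ₂⟩ := hDE.R2 hp₂ n₃
    have hsqP : π₁ ≫ p₂ = π₂ ≫ n₃ := hpb.w
    have hπ₁c : π₁ ≫ c = 0 := by
      rw [← hg_fac, ← Category.assoc, hsqP, Category.assoc, hng, comp_zero]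
    obtain ⟨u, hu_fac⟩ := kernelLiftAux hker_m π₁ hπ₁c
    have huv : u ≫ v = π₂ := by
      rw [← cancel_mono n₃, Category.assoc, hv_fac, ← Category.assoc, hu_fac, hsqP]
    have hv : S.IsDeflation v := hR3p u v (huv ▸ hπ₂)
    have hf₃g : f₃ ≫ g = 0 := by
      rw [← cancel_epi p₁, ← Category.assoc, hsq₂, Category.assoc, hg_fac, ← hcompf₂,
        Category.assoc, hmc, comp_zero, comp_zero]
    obtain ⟨w₃, hw₃_fac⟩ := kernelLiftAux hker_g f₃ hf₃g
    have hpw : p₁ ≫ w₃ = e ≫ v := by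
      rw [← cancel_mono n₃]
      simp only [Category.assoc, hw₃_fac, hv_fac, hsq₂, ← hcompf₂]
    have hw₃ : S.IsDeflation w₃ := hR3p p₁ w₃ (hpw ▸ hDE.R1 he hv)
    exact ⟨J, w₃, n₃, hw₃, ⟨Q, g, hconf_g⟩, hw₃_fac⟩
  · -- f₃ admissible → f₂ admissible
    rintro ⟨J, e₃, m₃, he₃, hm₃, hcompf₃⟩
    obtain ⟨Q, c₃, hconf_m₃⟩ := hm₃
    obtain ⟨hm₃c₃, ⟨hker_m₃⟩, -⟩ := S.kernelCokernel hconf_m₃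
    have hmono_m₃ : Mono m₃ := monoOfKernelAux hker_m₃
    have ht : S.IsDeflation (p₂ ≫ c₃) := hDE.R1 hp₂ ⟨J, m₃, hconf_m₃⟩
    obtain ⟨N, n, hconf_t⟩ := ht
    obtain ⟨hnt, ⟨hker_t⟩, -⟩ := S.kernelCokernel hconf_t
    have hmono_n : Mono n := monoOfKernelAux hker_t
    have hf₂t : f₂ ≫ p₂ ≫ c₃ = 0 := by
      rw [← Category.assoc, ← hsq₂, Category.assoc, ← hcompf₃, Category.assoc, hm₃c₃,
        comp_zero, comp_zero]
    obtain ⟨w, hw_fac⟩ := kernelLiftAux hker_t f₂ hf₂t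
    have hnpc : (n ≫ p₂) ≫ c₃ = 0 := by rw [Category.assoc]; exact hnt
    obtain ⟨v, hv_fac⟩ := kernelLiftAux hker_m₃ (n ≫ p₂) hnpc
    have hwv : w ≫ v = p₁ ≫ e₃ := by
      rw [← cancel_mono m₃]
      simp only [Category.assoc, hv_fac, hcompf₃, hsq₂, ← hw_fac]
    have hd : S.IsDeflation (p₁ ≫ e₃) := hDE.R1 hp₁ he₃
    obtain ⟨P, π₁, π₂, hpb, hπ₂⟩ := hDE.R2 hd v
    have hsqP : π₁ ≫ (p₁ ≫ e₃) = π₂ ≫ v := hpb.w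
    have hζv : (π₂ - π₁ ≫ w) ≫ v = 0 := by
      rw [Preadditive.sub_comp, Category.assoc, hwv, hsqP, sub_self]
    have h1 : ((π₂ - π₁ ≫ w) ≫ n) ≫ p₂ = 0 := by
      have : (π₂ - π₁ ≫ w) ≫ n ≫ p₂ = 0 := by
        rw [← hv_fac, ← Category.assoc, hζv, zero_comp]
      rw [Category.assoc]; exact this
    obtain ⟨r, hr⟩ := kernelLiftAux hker₂ ((π₂ - π₁ ≫ w) ≫ n) h1
    have hζ : π₂ - π₁ ≫ w = r ≫ i₁ ≫ w := by
      rw [← cancel_mono n, ← hr, Category.assoc, Category.assoc, hw_fac, hsq₁]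
    have hψ : (π₁ + r ≫ i₁) ≫ w = π₂ := by
      rw [Preadditive.add_comp, Category.assoc, ← hζ]
      abel
    have hw : S.IsDeflation w := hR3p (π₁ + r ≫ i₁) w (hψ ▸ hπ₂)
    exact ⟨N, w, n, hw, ⟨Q, p₂ ≫ c₃, hconf_t⟩, hw_fac⟩
end

section
/- Let E be a deflation-exact category satisfying axiom (R3+). Given a commutative diagram whose rows A₁ ↣ A₂ ↠ A₃ and B₁ ↣ B₂ ↠ A₃ are conflations, whose right vertical morphism is the identity on A₃, and with vertical morphisms f₁ : A₁ → B₁ and f₂ : A₂ → B₂, the morphism f₁ is admissible if and only if f₂ is admissible. -/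
open CategoryTheory CategoryTheory.Limits ZeroObject

attribute [local instance] CategoryTheory.Limits.hasBinaryBiproducts_of_finite_biproducts

universe v u

section AuxLemmas

variable {C : Type u} [Category.{v} C] [Preadditive C] [HasZeroObject C]
  [HasFiniteBiproducts C]

set_option linter.unusedSectionVars false in
/-- A kernel fork limit makes the fork map a monomorphism. -/
lemma mono_of_kernelFork {X Y Z : C} {k : X ⟶ Y} {g : Y ⟶ Z} {w : k ≫ g = 0}
    (h : IsLimit (KernelFork.ofι k w)) : Mono k :=
  ⟨fun {_} a b hab => Fork.IsLimit.hom_ext h (by simpa using hab)⟩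

/-- If `g` is a deflation and `k` is a kernel of `g`, then `(k, g)` is a conflation. -/
lemma conflation_of_kernel (S : ConflationStruct C) {X Y Z : C} {k : X ⟶ Y} {g : Y ⟶ Z}
    (hg : S.IsDeflation g) (w : k ≫ g = 0) (h : IsLimit (KernelFork.ofι k w)) :
    S.IsConflation k g := by
  obtain ⟨X₀, k₀, hc⟩ := hg
  have pair := S.kernelCokernel hc
  have h₀ := pair.isKernel.some
  have hcomp : (IsLimit.conePointUniqueUpToIso h₀ h).hom ≫ k = k₀ := by
    simpa using IsLimit.conePointUniqueUpToIso_hom_comp h₀ h WalkingParallelPair.zero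
  exact S.iso_closed (IsLimit.conePointUniqueUpToIso h₀ h) (Iso.refl Y) (Iso.refl Z)
    (by simp [hcomp]) (by simp) hc

/-- Sub-lemma A: if the left vertical morphism of a map of conflations (over the identity
on the right) is a deflation, so is the middle one. -/
lemma defl_subA (S : ConflationStruct C) (hDE : S.IsDeflationExact) (hR3p : S.AxiomR3plus)
    {A₁ A₂ A₃ B₁ B₂ : C}
    (i₁ : A₁ ⟶ A₂) (p₁ : A₂ ⟶ A₃) (i₂ : B₁ ⟶ B₂) (p₂ : B₂ ⟶ A₃)
    (f₁ : A₁ ⟶ B₁) (f₂ : A₂ ⟶ B₂)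
    (hrow₁ : S.IsConflation i₁ p₁) (hrow₂ : S.IsConflation i₂ p₂)
    (hsq₁ : i₁ ≫ f₂ = f₁ ≫ i₂) (hsq₂ : p₁ = f₂ ≫ p₂)
    (hf₁ : S.IsDeflation f₁) : S.IsDeflation f₂ := by
  have hp₁ : S.IsDeflation p₁ := ⟨A₁, i₁, hrow₁⟩
  obtain ⟨P, pa, pb, hpb, hpbd⟩ := hDE.R2 hp₁ p₂
  have pair₂ := S.kernelCokernel hrow₂
  have hker₂ := pair₂.isKernel.some
  obtain ⟨t', ht'⟩ := KernelFork.IsLimit.lift' hker₂ (pb - pa ≫ f₂) (by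
    rw [Preadditive.sub_comp, Category.assoc, ← hsq₂, hpb.w, sub_self])
  rw [Fork.ι_ofι] at ht'
  obtain ⟨Q, u, v, hq, hv⟩ := hDE.R2 hf₁ t'
  have key : (v ≫ pa + u ≫ i₁) ≫ f₂ = v ≫ pb := by
    rw [Preadditive.add_comp, Category.assoc, Category.assoc, hsq₁, ← Category.assoc u,
      hq.w, Category.assoc, ht']
    simp
  exact hR3p (v ≫ pa + u ≫ i₁) f₂ (by rw [key]; exact hDE.R1 hv hpbd)

/-- Sub-lemma B: if the middle vertical morphism of a map of conflations (over the identity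
on the right) is a deflation, so is the left one. -/
lemma defl_subB (S : ConflationStruct C) (hDE : S.IsDeflationExact) (hR3p : S.AxiomR3plus)
    {A₁ A₂ A₃ B₁ B₂ : C}
    (i₁ : A₁ ⟶ A₂) (p₁ : A₂ ⟶ A₃) (i₂ : B₁ ⟶ B₂) (p₂ : B₂ ⟶ A₃)
    (f₁ : A₁ ⟶ B₁) (f₂ : A₂ ⟶ B₂)
    (hrow₁ : S.IsConflation i₁ p₁) (hrow₂ : S.IsConflation i₂ p₂)
    (hsq₁ : i₁ ≫ f₂ = f₁ ≫ i₂) (hsq₂ : p₁ = f₂ ≫ p₂)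
    (hf₂ : S.IsDeflation f₂) : S.IsDeflation f₁ := by
  have pair₁ := S.kernelCokernel hrow₁
  have pair₂ := S.kernelCokernel hrow₂
  have hker₁ := pair₁.isKernel.some
  haveI : Mono i₂ := mono_of_kernelFork pair₂.isKernel.some
  obtain ⟨Q, a, b, hq, hb⟩ := hDE.R2 hf₂ i₂
  obtain ⟨τ, hτ⟩ := KernelFork.IsLimit.lift' hker₁ a (by
    rw [hsq₂, ← Category.assoc, hq.w, Category.assoc, pair₂.comp_zero, comp_zero])
  rw [Fork.ι_ofι] at hτ
  have key : τ ≫ f₁ = b := by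
    rw [← cancel_mono i₂, Category.assoc, ← hsq₁, ← Category.assoc, hτ, hq.w]
  exact hR3p τ f₁ (by rw [key]; exact hb)

end AuxLemmas

/-- Let `E` be a deflation-exact category satisfying axiom (R3+).  Given a
commutative diagram whose rows `A₁ ↣ A₂ ↠ A₃` and `B₁ ↣ B₂ ↠ A₃` are conflations
and whose right vertical morphism is the identity on `A₃`, the morphism `f₁` is
admissible if and only if `f₂` is admissible. -/
theorem admissible_stable_equal_right {C : Type u} [Category.{v} C] [Preadditive C]
    [HasZeroObject C] [HasFiniteBiproducts C] (S : ConflationStruct C)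
    (hDE : S.IsDeflationExact) (hR3p : S.AxiomR3plus)
    {A₁ A₂ A₃ B₁ B₂ : C}
    (i₁ : A₁ ⟶ A₂) (p₁ : A₂ ⟶ A₃) (i₂ : B₁ ⟶ B₂) (p₂ : B₂ ⟶ A₃)
    (f₁ : A₁ ⟶ B₁) (f₂ : A₂ ⟶ B₂)
    (hrow₁ : S.IsConflation i₁ p₁) (hrow₂ : S.IsConflation i₂ p₂)
    (hsq₁ : i₁ ≫ f₂ = f₁ ≫ i₂) (hsq₂ : p₁ = f₂ ≫ p₂) :
    S.IsAdmissible f₁ ↔ S.IsAdmissible f₂ := by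
  have pair₁ := S.kernelCokernel hrow₁
  have pair₂ := S.kernelCokernel hrow₂
  have hker₁ := pair₁.isKernel.some
  have hker₂ := pair₂.isKernel.some
  haveI mono_i₂ : Mono i₂ := mono_of_kernelFork hker₂
  have hp₁ : S.IsDeflation p₁ := ⟨A₁, i₁, hrow₁⟩
  constructor
  · -- f₁ admissible → f₂ admissible
    rintro ⟨I, e₁, m₁, he₁, ⟨Cc, c, hconfc⟩, hfac⟩
    have pairc := S.kernelCokernel hconfc
    have hkerc := pairc.isKernel.some
    haveI mono_m₁ : Mono m₁ := mono_of_kernelFork hkerc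
    -- pullback of p₂ along p₁
    obtain ⟨P, pa, pb, hpb, hpbd⟩ := hDE.R2 hp₁ p₂
    obtain ⟨t', ht'⟩ := KernelFork.IsLimit.lift' hker₂ (pb - pa ≫ f₂) (by
      rw [Preadditive.sub_comp, Category.assoc, ← hsq₂, hpb.w, sub_self])
    rw [Fork.ι_ofι] at ht'
    obtain ⟨Kb, kb, hconfb⟩ := hpbd
    have pairb := S.kernelCokernel hconfb
    have hcokb := pairb.isCokernel.some
    obtain ⟨w', hw'⟩ := KernelFork.IsLimit.lift' hker₁ (kb ≫ pa) (by
      rw [Category.assoc, hpb.w, ← Category.assoc, pairb.comp_zero, zero_comp])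
    rw [Fork.ι_ofι] at hw'
    have hkbt' : kb ≫ t' = -(w' ≫ f₁) := by
      rw [← cancel_mono i₂, Category.assoc, ht', Preadditive.comp_sub, pairb.comp_zero,
        ← Category.assoc, ← hw']
      simp [hsq₁, Category.assoc]
    obtain ⟨γ, hγ⟩ := CokernelCofork.IsColimit.desc' hcokb (t' ≫ c) (by
      rw [← Category.assoc, hkbt', ← hfac]
      simp [Category.assoc, pairc.comp_zero])
    rw [Cofork.π_ofπ] at hγ
    -- the section of pb over A₂ and the kernel inclusion of B₁ into P
    have hσw : 𝟙 A₂ ≫ p₁ = f₂ ≫ p₂ := by rw [Category.id_comp, hsq₂]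
    set σ := hpb.lift (𝟙 A₂) f₂ hσw with hσdef
    have hσa : σ ≫ pa = 𝟙 A₂ := hpb.lift_fst _ _ _
    have hσb : σ ≫ pb = f₂ := hpb.lift_snd _ _ _
    have hσt' : σ ≫ t' = 0 := by
      rw [← cancel_mono i₂, Category.assoc, ht', Preadditive.comp_sub, hσb,
        ← Category.assoc, hσa, Category.id_comp, sub_self, zero_comp]
    have hf₂γ : f₂ ≫ γ = 0 := by
      rw [← hσb, Category.assoc, hγ, ← Category.assoc, hσt', zero_comp]
    have hjw : (0 : B₁ ⟶ A₂) ≫ p₁ = i₂ ≫ p₂ := by rw [zero_comp, pair₂.comp_zero]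
    set j' := hpb.lift 0 i₂ hjw with hjdef
    have hja : j' ≫ pa = 0 := hpb.lift_fst _ _ _
    have hjb : j' ≫ pb = i₂ := hpb.lift_snd _ _ _
    have hjt' : j' ≫ t' = 𝟙 B₁ := by
      rw [← cancel_mono i₂, Category.assoc, ht', Preadditive.comp_sub, hjb,
        ← Category.assoc, hja, zero_comp, sub_zero, Category.id_comp]
    have hi₂γ : i₂ ≫ γ = c := by
      rw [← hjb, Category.assoc, hγ, ← Category.assoc, hjt', Category.id_comp]
    have hγd : S.IsDeflation γ := hR3p i₂ γ (by rw [hi₂γ]; exact ⟨I, m₁, hconfc⟩)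
    obtain ⟨J, m₂', hconfγ⟩ := hγd
    have pairγ := S.kernelCokernel hconfγ
    have hkerγ := pairγ.isKernel.some
    haveI mono_m₂' : Mono m₂' := mono_of_kernelFork hkerγ
    obtain ⟨e₂', he₂'⟩ := KernelFork.IsLimit.lift' hkerγ f₂ hf₂γ
    rw [Fork.ι_ofι] at he₂'
    obtain ⟨n, hn⟩ := KernelFork.IsLimit.lift' hkerγ (m₁ ≫ i₂) (by
      rw [Category.assoc, hi₂γ, pairc.comp_zero])
    rw [Fork.ι_ofι] at hn
    have hqdefl : S.IsDeflation (m₂' ≫ p₂) := hR3p e₂' _ (by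
      rw [← Category.assoc, he₂', ← hsq₂]; exact hp₁)
    have hnq : n ≫ (m₂' ≫ p₂) = 0 := by
      rw [← Category.assoc, hn, Category.assoc, pair₂.comp_zero, comp_zero]
    haveI mono_n : Mono n := by
      have : Mono (n ≫ m₂') := by rw [hn]; infer_instance
      exact mono_of_mono n m₂'
    have hnlim : IsLimit (KernelFork.ofι n hnq) := by
      refine KernelFork.IsLimit.ofι' n hnq (fun {T} t ht => ?_)
      obtain ⟨u, hu⟩ := KernelFork.IsLimit.lift' hker₂ (t ≫ m₂') (by
        rw [Category.assoc]; exact ht)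
      rw [Fork.ι_ofι] at hu
      have huc : u ≫ c = 0 := by
        rw [← hi₂γ, ← Category.assoc, hu, Category.assoc, pairγ.comp_zero, comp_zero]
      obtain ⟨u', hu'⟩ := KernelFork.IsLimit.lift' hkerc u huc
      rw [Fork.ι_ofι] at hu'
      refine ⟨u', ?_⟩
      rw [← cancel_mono m₂', Category.assoc, hn, ← Category.assoc, hu', hu]
    have hconfn : S.IsConflation n (m₂' ≫ p₂) := conflation_of_kernel S hqdefl hnq hnlim
    have hsqa : i₁ ≫ e₂' = e₁ ≫ n := by
      rw [← cancel_mono m₂', Category.assoc, Category.assoc, he₂', hn, hsq₁, ← hfac,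
        Category.assoc]
    have hsqb : p₁ = e₂' ≫ (m₂' ≫ p₂) := by
      rw [← Category.assoc, he₂', hsq₂]
    have he₂'d : S.IsDeflation e₂' :=
      defl_subA S hDE hR3p i₁ p₁ n (m₂' ≫ p₂) e₁ e₂' hrow₁ hconfn hsqa hsqb he₁
    exact ⟨J, e₂', m₂', he₂'d, ⟨Cc, γ, hconfγ⟩, he₂'⟩
  · -- f₂ admissible → f₁ admissible
    rintro ⟨I₂, e₂, m₂, he₂, ⟨C₂, c₂, hconfc₂⟩, hfac⟩
    have pairc₂ := S.kernelCokernel hconfc₂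
    have hkerc₂ := pairc₂.isKernel.some
    haveI mono_m₂ : Mono m₂ := mono_of_kernelFork hkerc₂
    have hq' : S.IsDeflation (m₂ ≫ p₂) := hR3p e₂ _ (by
      rw [← Category.assoc, hfac, ← hsq₂]; exact hp₁)
    obtain ⟨K, ι, hconfq'⟩ := hq'
    have pairq' := S.kernelCokernel hconfq'
    have hkerq' := pairq'.isKernel.some
    haveI mono_ι : Mono ι := mono_of_kernelFork hkerq'
    obtain ⟨e₁', he₁'⟩ := KernelFork.IsLimit.lift' hkerq' (i₁ ≫ e₂) (by
      rw [Category.assoc, ← Category.assoc e₂, hfac, ← hsq₂, pair₁.comp_zero])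
    rw [Fork.ι_ofι] at he₁'
    obtain ⟨m₁', hm₁'⟩ := KernelFork.IsLimit.lift' hker₂ (ι ≫ m₂) (by
      rw [Category.assoc]; exact pairq'.comp_zero)
    rw [Fork.ι_ofι] at hm₁'
    have hfact : e₁' ≫ m₁' = f₁ := by
      rw [← cancel_mono i₂, Category.assoc, hm₁', ← Category.assoc, he₁', Category.assoc,
        hfac, ← hsq₁]
    have he₁'d : S.IsDeflation e₁' :=
      defl_subB S hDE hR3p i₁ p₁ ι (m₂ ≫ p₂) e₁' e₂ hrow₁ hconfq' he₁'.symm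
        (by rw [hsq₂, ← hfac, Category.assoc]) he₂
    obtain ⟨P', pA, pB, hpb', hpBd⟩ := hDE.R2 ⟨K, ι, hconfq'⟩ p₂
    obtain ⟨θ, hθ⟩ := KernelFork.IsLimit.lift' hker₂ (pB - pA ≫ m₂) (by
      rw [Preadditive.sub_comp, Category.assoc, ← hpb'.w, sub_self])
    rw [Fork.ι_ofι] at hθ
    have hθd : θ ≫ (i₂ ≫ c₂) = pB ≫ c₂ := by
      rw [← Category.assoc, hθ, Preadditive.sub_comp, Category.assoc, pairc₂.comp_zero,
        comp_zero, sub_zero]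
    have hdd : S.IsDeflation (i₂ ≫ c₂) := hR3p θ _ (by
      rw [hθd]; exact hDE.R1 hpBd ⟨I₂, m₂, hconfc₂⟩)
    have hw0 : m₁' ≫ (i₂ ≫ c₂) = 0 := by
      rw [← Category.assoc, hm₁', Category.assoc, pairc₂.comp_zero, comp_zero]
    haveI mono_m₁' : Mono m₁' := by
      have : Mono (m₁' ≫ i₂) := by rw [hm₁']; infer_instance
      exact mono_of_mono m₁' i₂
    have hlim : IsLimit (KernelFork.ofι m₁' hw0) := by
      refine KernelFork.IsLimit.ofι' m₁' hw0 (fun {T} t ht => ?_)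
      obtain ⟨u, hu⟩ := KernelFork.IsLimit.lift' hkerc₂ (t ≫ i₂) (by
        rw [Category.assoc]; exact ht)
      rw [Fork.ι_ofι] at hu
      have huq : u ≫ (m₂ ≫ p₂) = 0 := by
        rw [← Category.assoc, hu, Category.assoc, pair₂.comp_zero, comp_zero]
      obtain ⟨u', hu'⟩ := KernelFork.IsLimit.lift' hkerq' u huq
      rw [Fork.ι_ofι] at hu'
      refine ⟨u', ?_⟩
      rw [← cancel_mono i₂, Category.assoc, hm₁', ← Category.assoc, hu', hu]
    have hconfm₁' : S.IsConflation m₁' (i₂ ≫ c₂) := conflation_of_kernel S hdd hw0 hlim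
    exact ⟨K, e₁', m₁', he₁'d, ⟨C₂, i₂ ≫ c₂, hconfm₁'⟩, hfact⟩
end

section
/- (Ker-coker sequence) Let E be a deflation-exact category satisfying axiom (R3+). Let f : A → B and g : B → C be admissible morphisms such that the composition h = g∘f is also admissible. Then there is a natural exact sequence 0 → ker(f) → ker(h) → ker(g) → coker(f) → coker(h) → coker(g) → 0. -/
open CategoryTheory CategoryTheory.Limits ZeroObject

attribute [local instance] CategoryTheory.Limits.hasBinaryBiproducts_of_finite_biproducts

universe v u

section KerCokerHelpers
set_option linter.unusedSectionVars false

variable {C : Type u} [Category.{v} C] [Preadditive C] [HasZeroObject C]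
  [HasFiniteBiproducts C]

lemma isKernelOf_of_existsUnique {K Y Z : C} {k : K ⟶ Y} {g : Y ⟶ Z} (hw : k ≫ g = 0)
    (H : ∀ ⦃W : C⦄ (t : W ⟶ Y), t ≫ g = 0 → ∃! s : W ⟶ K, s ≫ k = t) : IsKernelOf k g := by
  refine ⟨hw, ⟨KernelFork.IsLimit.ofι k hw (fun {W} t ht => (H t ht).exists.choose)
    (fun {W} t ht => (H t ht).exists.choose_spec) (fun {W} t ht s hs => ?_)⟩⟩
  exact (H t ht).unique hs (H t ht).exists.choose_spec

lemma IsKernelOf.comp_eq_zero {K Y Z : C} {k : K ⟶ Y} {g : Y ⟶ Z} (h : IsKernelOf k g) :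
    k ≫ g = 0 := h.choose

lemma IsKernelOf.existsUnique {K Y Z : C} {k : K ⟶ Y} {g : Y ⟶ Z} (h : IsKernelOf k g)
    {W : C} (t : W ⟶ Y) (ht : t ≫ g = 0) : ∃! s : W ⟶ K, s ≫ k = t := by
  obtain ⟨w, ⟨hl⟩⟩ := h
  obtain ⟨l, hl'⟩ := KernelFork.IsLimit.lift' hl t ht
  rw [Fork.ι_ofι] at hl'
  refine ⟨l, hl', fun s hs => Fork.IsLimit.hom_ext hl ?_⟩
  rw [Fork.ι_ofι, hs, hl']

lemma IsKernelOf.mono {K Y Z : C} {k : K ⟶ Y} {g : Y ⟶ Z} (h : IsKernelOf k g) : Mono k := by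
  constructor
  intro W a b hab
  have ha := h.existsUnique (b ≫ k) (by rw [Category.assoc, h.comp_eq_zero, comp_zero])
  exact ha.unique hab rfl

lemma isCokernelOf_of_existsUnique {X Y Q : C} {c : Y ⟶ Q} {f : X ⟶ Y} (hw : f ≫ c = 0)
    (H : ∀ ⦃W : C⦄ (t : Y ⟶ W), f ≫ t = 0 → ∃! s : Q ⟶ W, c ≫ s = t) : IsCokernelOf c f := by
  refine ⟨hw, ⟨CokernelCofork.IsColimit.ofπ c hw (fun {W} t ht => (H t ht).exists.choose)
    (fun {W} t ht => (H t ht).exists.choose_spec) (fun {W} t ht s hs => ?_)⟩⟩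
  exact (H t ht).unique hs (H t ht).exists.choose_spec

lemma IsCokernelOf.comp_eq_zero {X Y Q : C} {c : Y ⟶ Q} {f : X ⟶ Y} (h : IsCokernelOf c f) :
    f ≫ c = 0 := h.choose

lemma IsCokernelOf.existsUnique {X Y Q : C} {c : Y ⟶ Q} {f : X ⟶ Y} (h : IsCokernelOf c f)
    {W : C} (t : Y ⟶ W) (ht : f ≫ t = 0) : ∃! s : Q ⟶ W, c ≫ s = t := by
  obtain ⟨w, ⟨hl⟩⟩ := h
  obtain ⟨l, hl'⟩ := CokernelCofork.IsColimit.desc' hl t ht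
  rw [Cofork.π_ofπ] at hl'
  refine ⟨l, hl', fun s hs => Cofork.IsColimit.hom_ext hl ?_⟩
  rw [Cofork.π_ofπ, hs, hl']

lemma IsCokernelOf.epi {X Y Q : C} {c : Y ⟶ Q} {f : X ⟶ Y} (h : IsCokernelOf c f) : Epi c := by
  constructor
  intro W a b hab
  have ha := h.existsUnique (c ≫ b) (by rw [← Category.assoc, h.comp_eq_zero, zero_comp])
  exact ha.unique hab rfl

lemma IsKernelOf.isoOf {K K' Y Z : C} {k : K ⟶ Y} {k' : K' ⟶ Y} {g : Y ⟶ Z}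
    (h : IsKernelOf k g) (h' : IsKernelOf k' g) : ∃ e : K' ≅ K, e.hom ≫ k = k' := by
  haveI := h.mono; haveI := h'.mono
  obtain ⟨a, ha, -⟩ := h.existsUnique k' h'.comp_eq_zero
  obtain ⟨b, hb, -⟩ := h'.existsUnique k h.comp_eq_zero
  refine ⟨⟨a, b, ?_, ?_⟩, ha⟩
  · rw [← cancel_mono k']
    rw [Category.assoc, hb, ha, Category.id_comp]
  · rw [← cancel_mono k]
    rw [Category.assoc, ha, hb, Category.id_comp]

lemma IsKernelOf.comp_mono {K Y Z Z' : C} {k : K ⟶ Y} {g : Y ⟶ Z} (h : IsKernelOf k g)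
    (j : Z ⟶ Z') (hj : Mono j) : IsKernelOf k (g ≫ j) := by
  haveI := hj
  refine isKernelOf_of_existsUnique (by rw [← Category.assoc, h.comp_eq_zero, zero_comp]) ?_
  intro W t ht
  refine h.existsUnique t ?_
  rw [← cancel_mono j, Category.assoc, ht, zero_comp]

lemma IsCokernelOf.epi_comp {X X' Y Q : C} {c : Y ⟶ Q} {f : X ⟶ Y} (h : IsCokernelOf c f)
    (p : X' ⟶ X) (hp : Epi p) : IsCokernelOf c (p ≫ f) := by
  haveI := hp
  refine isCokernelOf_of_existsUnique (by rw [Category.assoc, h.comp_eq_zero, comp_zero]) ?_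
  intro W t ht
  refine h.existsUnique t ?_
  rw [← cancel_epi p, ← Category.assoc, ht, comp_zero]

lemma isKernelOf_id_zero (X : C) : IsKernelOf (𝟙 X) (0 : X ⟶ (0 : C)) := by
  refine isKernelOf_of_existsUnique (by simp) ?_
  intro W t _
  exact ⟨t, by simp, fun y hy => by simpa using hy⟩

lemma isCokernelOf_id_zero (X : C) : IsCokernelOf (𝟙 X) (0 : (0 : C) ⟶ X) := by
  refine isCokernelOf_of_existsUnique (by simp) ?_
  intro W t _
  exact ⟨t, by simp, fun y hy => by simpa using hy⟩

lemma isKernelOf_zero_of_mono {K Y : C} {α : K ⟶ Y} (hα : Mono α) :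
    IsKernelOf (0 : (0 : C) ⟶ K) α := by
  haveI := hα
  refine isKernelOf_of_existsUnique (by simp) ?_
  intro W t ht
  have ht0 : t = 0 := by rw [← cancel_mono α, ht, zero_comp]
  exact ⟨0, by simp [ht0], fun y hy => (isZero_zero C).eq_of_tgt _ _⟩

lemma isCokernelOf_zero_of_epi {Y Q : C} {ε : Y ⟶ Q} (hε : Epi ε) :
    IsCokernelOf (0 : Q ⟶ (0 : C)) ε := by
  haveI := hε
  refine isCokernelOf_of_existsUnique (by simp) ?_
  intro W t ht
  have ht0 : t = 0 := by rw [← cancel_epi ε, ht, comp_zero]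
  exact ⟨0, by simp [ht0], fun y hy => (isZero_zero C).eq_of_src _ _⟩

variable {S : ConflationStruct C}

lemma conf_isKernelOf {X Y Z : C} {f : X ⟶ Y} {g : Y ⟶ Z} (h : S.IsConflation f g) :
    IsKernelOf f g := ⟨(S.kernelCokernel h).comp_zero, (S.kernelCokernel h).isKernel⟩

lemma conf_isCokernelOf {X Y Z : C} {f : X ⟶ Y} {g : Y ⟶ Z} (h : S.IsConflation f g) :
    IsCokernelOf g f := ⟨(S.kernelCokernel h).comp_zero, (S.kernelCokernel h).isCokernel⟩

lemma isDeflation_iso_comp {Y Y' Z : C} {g : Y ⟶ Z} (hg : S.IsDeflation g) (e : Y' ≅ Y) :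
    S.IsDeflation (e.hom ≫ g) := by
  obtain ⟨X, f, hc⟩ := hg
  exact ⟨X, f ≫ e.inv, S.iso_closed (Iso.refl X) e.symm (Iso.refl Z) (by simp) (by simp) hc⟩

lemma conflation_of_deflation_isKernelOf {K Y Z : C} {k : K ⟶ Y} {g : Y ⟶ Z}
    (hg : S.IsDeflation g) (hk : IsKernelOf k g) : S.IsConflation k g := by
  obtain ⟨X, f, hc⟩ := hg
  obtain ⟨e, he⟩ := hk.isoOf (conf_isKernelOf hc)
  exact S.iso_closed e (Iso.refl Y) (Iso.refl Z) (by simpa using he.symm) (by simp) hc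

lemma conflation_zero_id (hDE : S.IsDeflationExact) (X : C) :
    S.IsConflation (0 : (0 : C) ⟶ X) (𝟙 X) := by
  obtain ⟨P, p₁, p₂, hpb, hp₂⟩ := hDE.R2 hDE.R0 (0 : X ⟶ (0 : C))
  have hw0 : (0 : X ⟶ (0 : C)) ≫ 𝟙 (0 : C) = 𝟙 X ≫ (0 : X ⟶ (0 : C)) := by simp
  have hl : IsIso p₂ := by
    refine ⟨hpb.lift 0 (𝟙 X) hw0, ?_, hpb.lift_snd _ _ _⟩
    apply hpb.hom_ext
    · exact (isZero_zero C).eq_of_tgt _ _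
    · rw [Category.assoc, hpb.lift_snd, Category.comp_id, Category.id_comp]
  obtain ⟨T, t, hc⟩ := hp₂
  have htk := conf_isKernelOf hc
  haveI := htk.mono
  haveI := hl
  have ht0 : t = 0 := by
    have h1 := htk.comp_eq_zero
    calc t = (t ≫ p₂) ≫ inv p₂ := by simp
    _ = 0 := by rw [h1, zero_comp]
  have hT : (𝟙 T) = (0 : T ⟶ T) := by
    rw [← cancel_mono t, ht0, comp_zero, zero_comp]
  have eT : T ≅ (0 : C) :=
    { hom := 0, inv := 0,
      hom_inv_id := by rw [hT]; simp
      inv_hom_id := (isZero_zero C).eq_of_src _ _ }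
  refine S.iso_closed eT (asIso p₂) (Iso.refl X) ?_ ?_ hc
  · rw [ht0, zero_comp, comp_zero]
  · simp

lemma conflation_id_zero (hDE : S.IsDeflationExact) (hR3p : S.AxiomR3plus) (X : C) :
    S.IsConflation (𝟙 X) (0 : X ⟶ (0 : C)) := by
  have h0 : S.IsDeflation (0 : X ⟶ (0 : C)) := by
    have heq : (0 : (0 : C) ⟶ X) ≫ (0 : X ⟶ (0 : C)) = 𝟙 (0 : C) :=
      (isZero_zero C).eq_of_src _ _
    exact hR3p _ _ (heq ▸ hDE.R0)
  obtain ⟨T, t, hc⟩ := h0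
  have htk := conf_isKernelOf hc
  haveI := htk.mono
  obtain ⟨s, hs, -⟩ := htk.existsUnique (𝟙 X) (by simp)
  have hts : t ≫ s = 𝟙 T := by
    rw [← cancel_mono t, Category.assoc, hs, Category.comp_id, Category.id_comp]
  refine S.iso_closed ⟨t, s, hts, hs⟩ (Iso.refl X) (Iso.refl (0 : C)) (by simp) ?_ hc
  exact (isZero_zero C).eq_of_tgt _ _

lemma isDeflation_id (hDE : S.IsDeflationExact) (X : C) : S.IsDeflation (𝟙 X) :=
  ⟨_, _, conflation_zero_id hDE X⟩

lemma isInflation_zero_from (hDE : S.IsDeflationExact) (X : C) :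
    S.IsInflation (0 : (0 : C) ⟶ X) :=
  ⟨_, _, conflation_zero_id hDE X⟩

lemma isInflation_id (hDE : S.IsDeflationExact) (hR3p : S.AxiomR3plus) (X : C) :
    S.IsInflation (𝟙 X) :=
  ⟨_, _, conflation_id_zero hDE hR3p X⟩

lemma isDeflation_to_zero (hDE : S.IsDeflationExact) (hR3p : S.AxiomR3plus) (X : C) :
    S.IsDeflation (0 : X ⟶ (0 : C)) :=
  ⟨_, _, conflation_id_zero hDE hR3p X⟩

lemma isDeflation_fst (hDE : S.IsDeflationExact) {P Y W Z : C} {p₁ : P ⟶ Y} {p₂ : P ⟶ W}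
    {g : Y ⟶ Z} {h : W ⟶ Z} (hpb : IsPullback p₁ p₂ g h) (hh : S.IsDeflation h) :
    S.IsDeflation p₁ := by
  obtain ⟨P', q₁, q₂, hpb₂, hq₂⟩ := hDE.R2 hh g
  have hpb₂' := hpb₂.flip
  have hah₁ := hpb₂'.lift_fst p₁ p₂ hpb.w
  have hah₂ := hpb₂'.lift_snd p₁ p₂ hpb.w
  have hai₁ := hpb.lift_fst q₂ q₁ hpb₂'.w
  have hai₂ := hpb.lift_snd q₂ q₁ hpb₂'.w
  set ah := hpb₂'.lift p₁ p₂ hpb.w with hahdef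
  set ai := hpb.lift q₂ q₁ hpb₂'.w with haidef
  have h1 : ah ≫ ai = 𝟙 P := by
    apply hpb.hom_ext
    · rw [Category.assoc, hai₁, hah₁, Category.id_comp]
    · rw [Category.assoc, hai₂, hah₂, Category.id_comp]
  have h2 : ai ≫ ah = 𝟙 P' := by
    apply hpb₂'.hom_ext
    · rw [Category.assoc, hah₁, hai₁, Category.id_comp]
    · rw [Category.assoc, hah₂, hai₂, Category.id_comp]
  have : p₁ = Iso.hom ⟨ah, ai, h1, h2⟩ ≫ q₂ := hah₁.symm
  rw [this]
  exact isDeflation_iso_comp hq₂ _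

/-- Kernel sequence of a composition: if `b` is a deflation, `u` a kernel of `b`, `w` a
kernel of `b ≫ cde` and `wm` a kernel of `cde`, then the induced maps form a conflation. -/
lemma lcomp (hDE : S.IsDeflationExact) {A I K' Kb Ka Kc : C} {b : A ⟶ I} {cde : I ⟶ K'}
    {u : Kb ⟶ A} {w : Ka ⟶ A} {wm : Kc ⟶ I}
    (hb : S.IsDeflation b) (hu : IsKernelOf u b) (hw : IsKernelOf w (b ≫ cde))
    (hwm : IsKernelOf wm cde) :
    ∃ (al : Kb ⟶ Ka) (pi : Ka ⟶ Kc),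
      al ≫ w = u ∧ pi ≫ wm = w ≫ b ∧ S.IsConflation al pi := by
  haveI := hu.mono; haveI := hw.mono; haveI := hwm.mono
  obtain ⟨P, p₁, p₂, hpb, hp₂⟩ := hDE.R2 hb wm
  -- the canonical map Kb ⟶ P
  have hu0 : u ≫ b = (0 : Kb ⟶ Kc) ≫ wm := by rw [hu.comp_eq_zero, zero_comp]
  set uhat : Kb ⟶ P := hpb.lift u 0 hu0 with huhatdef
  have huhat₁ : uhat ≫ p₁ = u := hpb.lift_fst _ _ _
  have huhat₂ : uhat ≫ p₂ = 0 := hpb.lift_snd _ _ _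
  -- uhat is a kernel of p₂
  have huhatk : IsKernelOf uhat p₂ := by
    refine isKernelOf_of_existsUnique huhat₂ ?_
    intro W t ht
    have h1 : (t ≫ p₁) ≫ b = 0 := by
      rw [Category.assoc, hpb.w, ← Category.assoc, ht, zero_comp]
    obtain ⟨s, hs, -⟩ := hu.existsUnique (t ≫ p₁) h1
    refine ⟨s, ?_, ?_⟩
    · apply hpb.hom_ext
      · rw [Category.assoc, huhat₁, hs]
      · rw [Category.assoc, huhat₂, comp_zero, ht]
    · intro y hy
      rw [← cancel_mono u, hs, ← huhat₁, ← Category.assoc, hy]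
  have hcuhatp₂ : S.IsConflation uhat p₂ := conflation_of_deflation_isKernelOf hp₂ huhatk
  -- p₁ is a kernel of b ≫ cde
  have hp₁k : IsKernelOf p₁ (b ≫ cde) := by
    refine isKernelOf_of_existsUnique ?_ ?_
    · rw [← Category.assoc, hpb.w, Category.assoc, hwm.comp_eq_zero, comp_zero]
    · intro W t ht
      have h1 : (t ≫ b) ≫ cde = 0 := by rw [Category.assoc, ht]
      obtain ⟨s, hs, -⟩ := hwm.existsUnique (t ≫ b) h1
      have hls : t ≫ b = s ≫ wm := hs.symm
      refine ⟨hpb.lift t s hls, hpb.lift_fst _ _ _, ?_⟩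
      intro y hy
      apply hpb.hom_ext
      · rw [hpb.lift_fst, hy]
      · rw [hpb.lift_snd]
        rw [← cancel_mono wm, Category.assoc, ← hpb.w, ← Category.assoc, hy, hs]
  obtain ⟨e, he⟩ := hw.isoOf hp₁k
  -- the two induced maps
  obtain ⟨al, hal, -⟩ := hw.existsUnique u
    (by rw [← Category.assoc, hu.comp_eq_zero, zero_comp])
  refine ⟨al, e.inv ≫ p₂, hal, ?_, ?_⟩
  · rw [Category.assoc, ← cancel_epi e.hom, ← Category.assoc, ← Category.assoc,
      e.hom_inv_id, Category.id_comp, ← hpb.w, ← Category.assoc, he]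
  · refine S.iso_closed (Iso.refl Kb) e (Iso.refl Kc) ?_ ?_ hcuhatp₂
    · rw [Iso.refl_hom, Category.id_comp, ← cancel_mono w, Category.assoc, he, huhat₁, hal]
    · rw [Iso.refl_hom, Category.comp_id, ← Category.assoc, e.hom_inv_id, Category.id_comp]

end KerCokerHelpers

/-- **Ker-coker sequence.**  Let `E` be a deflation-exact category satisfying axiom
(R3+) and let `f : A ⟶ B`, `g : B ⟶ Q` be admissible morphisms such that
`h = f ≫ g` is admissible.  There is a natural exact sequence
`0 → ker f → ker h → ker g → coker f → coker h → coker g → 0`, where the maps are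
the natural induced ones and the connecting map `ker g → coker f` is induced by
the identity of `B`. -/
theorem ker_coker_sequence {C : Type u} [Category.{v} C] [Preadditive C]
    [HasZeroObject C] [HasFiniteBiproducts C] (S : ConflationStruct C)
    (hDE : S.IsDeflationExact) (hR3p : S.AxiomR3plus)
    {A B Q : C} (f : A ⟶ B) (g : B ⟶ Q)
    (hf : S.IsAdmissible f) (hg : S.IsAdmissible g) (hh : S.IsAdmissible (f ≫ g)) :
    ∃ (Kf Kh Kg Cf Ch Cg : C)
      (kf : Kf ⟶ A) (kh : Kh ⟶ A) (kg : Kg ⟶ B)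
      (cf : B ⟶ Cf) (ch : Q ⟶ Ch) (cg : Q ⟶ Cg)
      (α : Kf ⟶ Kh) (β : Kh ⟶ Kg) (γ : Cf ⟶ Ch) (ε : Ch ⟶ Cg),
      IsKernelOf kf f ∧ IsKernelOf kh (f ≫ g) ∧ IsKernelOf kg g ∧
      IsCokernelOf cf f ∧ IsCokernelOf ch (f ≫ g) ∧ IsCokernelOf cg g ∧
      α ≫ kh = kf ∧ β ≫ kg = kh ≫ f ∧ cf ≫ γ = g ≫ ch ∧ ch ≫ ε = cg ∧
      S.ExactAt (0 : (0 : C) ⟶ Kf) α ∧ S.ExactAt α β ∧ S.ExactAt β (kg ≫ cf) ∧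
      S.ExactAt (kg ≫ cf) γ ∧ S.ExactAt γ ε ∧ S.ExactAt ε (0 : Cg ⟶ (0 : C)) := by
  classical
  obtain ⟨I, p, i, hp, hi, hpi⟩ := hf
  obtain ⟨J, q, j, hq, hj, hqj⟩ := hg
  obtain ⟨K, r, k, hr, hk, hrk⟩ := hh
  obtain ⟨Kf, u, hcu⟩ := hp
  obtain ⟨Cf, c, hcc⟩ := hi
  obtain ⟨Kg, v, hcv⟩ := hq
  obtain ⟨Cg, d, hcd⟩ := hj
  obtain ⟨Kh, w, hcw⟩ := hr
  obtain ⟨Ch, e, hce⟩ := hk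
  -- kernel/cokernel facts from the six conflations
  have hu : IsKernelOf u p := conf_isKernelOf hcu
  have hcop : IsCokernelOf p u := conf_isCokernelOf hcu
  have hic : IsKernelOf i c := conf_isKernelOf hcc
  have hci : IsCokernelOf c i := conf_isCokernelOf hcc
  have hv : IsKernelOf v q := conf_isKernelOf hcv
  have hcoq : IsCokernelOf q v := conf_isCokernelOf hcv
  have hjd : IsKernelOf j d := conf_isKernelOf hcd
  have hcdj : IsCokernelOf d j := conf_isCokernelOf hcd
  have hwr : IsKernelOf w r := conf_isKernelOf hcw
  have hcor : IsCokernelOf r w := conf_isCokernelOf hcw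
  have hke : IsKernelOf k e := conf_isKernelOf hce
  have hcek : IsCokernelOf e k := conf_isCokernelOf hce
  haveI := hu.mono; haveI := hic.mono; haveI := hv.mono
  haveI := hjd.mono; haveI := hwr.mono; haveI := hke.mono
  haveI := hcop.epi; haveI := hci.epi; haveI := hcoq.epi
  haveI := hcdj.epi; haveI := hcor.epi; haveI := hcek.epi
  -- kernels and cokernels of f, g, f ≫ g
  have hkf : IsKernelOf u f := by
    have := hu.comp_mono i hic.mono; rwa [hpi] at this
  have hkh : IsKernelOf w (f ≫ g) := by
    have := hwr.comp_mono k hke.mono; rwa [hrk] at this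
  have hkg : IsKernelOf v g := by
    have := hv.comp_mono j hjd.mono; rwa [hqj] at this
  have hcf : IsCokernelOf c f := by
    have := hci.epi_comp p hcop.epi; rwa [hpi] at this
  have hch : IsCokernelOf e (f ≫ g) := by
    have := hcek.epi_comp r hcor.epi; rwa [hrk] at this
  have hcg : IsCokernelOf d g := by
    have := hcdj.epi_comp q hcoq.epi; rwa [hqj] at this
  -- the deflation m : I ⟶ K with p ≫ m = r
  have hur : u ≫ r = 0 := by
    rw [← cancel_mono k, Category.assoc, hrk, ← Category.assoc, hkf.comp_eq_zero,
      zero_comp, zero_comp]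
  obtain ⟨m, hm, -⟩ := hcop.existsUnique r hur
  have hmdefl : S.IsDeflation m := hR3p p m (by rw [hm]; exact ⟨_, _, hcw⟩)
  have hmk : m ≫ k = i ≫ g := by
    rw [← cancel_epi p, ← Category.assoc, hm, hrk, ← Category.assoc, hpi]
  obtain ⟨Km, wm, hcwm⟩ := hmdefl
  have hwm : IsKernelOf wm m := conf_isKernelOf hcwm
  haveI := hwm.mono
  have hmdefl' : S.IsDeflation m := ⟨_, _, hcwm⟩
  -- the conflation (α, π) : Kf ↣ Kh ↠ Km
  have hkr' : IsKernelOf w (p ≫ m) := by rwa [hm]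
  obtain ⟨α, π, hαw, hπ, hcαπ⟩ := lcomp hDE ⟨_, _, hcu⟩ hu hkr' hwm
  haveI := (conf_isCokernelOf hcαπ).epi
  haveI : Mono α := by
    haveI : Mono (α ≫ w) := by rw [hαw]; infer_instance
    exact mono_of_mono α w
  -- the map β : Kh ⟶ Kg
  have hwfg : w ≫ f ≫ g = 0 := by
    rw [← hrk, ← Category.assoc, hwr.comp_eq_zero, zero_comp]
  have hwf : (w ≫ f) ≫ q = 0 := by
    rw [← cancel_mono j, zero_comp, Category.assoc, Category.assoc, hqj]
    exact hwfg
  obtain ⟨β, hβ, -⟩ := hv.existsUnique (w ≫ f) hwf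
  -- the deflation ε : Ch ⟶ Cg
  have hgd : g ≫ d = 0 := by
    rw [← hqj, Category.assoc, hjd.comp_eq_zero, comp_zero]
  have hkd : k ≫ d = 0 := by
    rw [← cancel_epi r, ← Category.assoc, hrk, Category.assoc, hgd, comp_zero, comp_zero]
  obtain ⟨ε, hε, -⟩ := hcek.existsUnique d hkd
  have hεdefl : S.IsDeflation ε := hR3p e ε (by rw [hε]; exact ⟨_, _, hcd⟩)
  obtain ⟨T', τ', hcτ'⟩ := hεdefl
  have hτ' : IsKernelOf τ' ε := conf_isKernelOf hcτ'
  haveI := hτ'.mono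
  haveI := (conf_isCokernelOf hcτ').epi
  -- the conflation (n, ρ) : K ↣ J ↠ T'
  have hkjd : IsKernelOf j (e ≫ ε) := by rwa [hε]
  obtain ⟨n, ρ, hn, hρ, hcnρ⟩ := lcomp hDE ⟨_, _, hce⟩ hke hkjd hτ'
  have hnρ0 : n ≫ ρ = 0 := (conf_isKernelOf hcnρ).comp_eq_zero
  haveI := (conf_isKernelOf hcnρ).mono
  -- the object D = kernel of the deflation q ≫ ρ
  have hqρ : S.IsDeflation (q ≫ ρ) := hDE.R1 ⟨_, _, hcv⟩ ⟨_, _, hcnρ⟩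
  obtain ⟨D, wD, hcwD⟩ := hqρ
  have hwD : IsKernelOf wD (q ≫ ρ) := conf_isKernelOf hcwD
  haveI := hwD.mono
  -- the deflation σ' : Cf ⟶ T'
  have hiq : i ≫ q = m ≫ n := by
    rw [← cancel_mono j, Category.assoc, hqj, Category.assoc, hn, hmk]
  have hiqρ : i ≫ q ≫ ρ = 0 := by
    rw [← Category.assoc, hiq, Category.assoc, hnρ0, comp_zero]
  obtain ⟨σ', hσ', -⟩ := hci.existsUnique (q ≫ ρ) hiqρ
  have hσ'defl : S.IsDeflation σ' := hR3p c σ' (by rw [hσ']; exact ⟨_, _, hcwD⟩)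
  obtain ⟨T, τ, hcτ⟩ := hσ'defl
  have hτ : IsKernelOf τ σ' := conf_isKernelOf hcτ
  haveI := hτ.mono
  haveI := (conf_isCokernelOf hcτ).epi
  -- the conflation (ψ, θT) : I ↣ D ↠ T
  have hwDc : IsKernelOf wD (c ≫ σ') := by rwa [hσ']
  obtain ⟨ψ, θT, hψ, hθT, hcψθT⟩ := lcomp hDE ⟨_, _, hcc⟩ hic hwDc hτ
  have hψθT0 : ψ ≫ θT = 0 := (conf_isKernelOf hcψθT).comp_eq_zero
  -- the conflation (v', θK) : Kg ↣ D ↠ K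
  obtain ⟨v', θK, hv', hθK, hcv'θK⟩ := lcomp hDE ⟨_, _, hcv⟩ hv hwD (conf_isKernelOf hcnρ)
  have hv'θK0 : v' ≫ θK = 0 := (conf_isKernelOf hcv'θK).comp_eq_zero
  haveI := (conf_isKernelOf hcv'θK).mono
  have hψθK : ψ ≫ θK = m := by
    rw [← cancel_mono n, Category.assoc, hθK, ← Category.assoc, hψ, hiq]
  -- σ = v' ≫ θT is a deflation
  obtain ⟨E, pE₁, pE₂, hpbE, hpE₂⟩ := hDE.R2 (⟨_, _, hcv'θK⟩ : S.IsDeflation θK) m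
  have hpE₁ : S.IsDeflation pE₁ := isDeflation_fst hDE hpbE hmdefl'
  have hηθK : (pE₁ - pE₂ ≫ ψ) ≫ θK = 0 := by
    rw [Preadditive.sub_comp, hpbE.w, Category.assoc, hψθK, sub_self]
  obtain ⟨lam, hlam, -⟩ := (conf_isKernelOf hcv'θK).existsUnique (pE₁ - pE₂ ≫ ψ) hηθK
  have hlamσ : lam ≫ v' ≫ θT = pE₁ ≫ θT := by
    rw [← Category.assoc, hlam, Preadditive.sub_comp, Category.assoc, hψθT0,
      comp_zero, sub_zero]
  have hσdefl : S.IsDeflation (v' ≫ θT) :=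
    hR3p lam (v' ≫ θT) (by rw [hlamσ]; exact hDE.R1 hpE₁ ⟨_, _, hcψθT⟩)
  -- m₂ : Km ⟶ Kg, a kernel of σ
  have hwmψθK : (wm ≫ ψ) ≫ θK = 0 := by
    rw [Category.assoc, hψθK, hwm.comp_eq_zero]
  obtain ⟨m₂, hm₂, -⟩ := (conf_isKernelOf hcv'θK).existsUnique (wm ≫ ψ) hwmψθK
  have hm₂v : m₂ ≫ v = wm ≫ i := by
    rw [← hv', ← Category.assoc, hm₂, Category.assoc, hψ]
  haveI : Mono m₂ := by
    haveI : Mono (m₂ ≫ v) := by rw [hm₂v]; exact mono_comp _ _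
    exact mono_of_mono m₂ v
  have hm₂σ : IsKernelOf m₂ (v' ≫ θT) := by
    refine isKernelOf_of_existsUnique ?_ ?_
    · rw [← Category.assoc, hm₂, Category.assoc, hψθT0, comp_zero]
    · intro W t ht
      have h1 : (t ≫ v') ≫ θT = 0 := by rw [Category.assoc, ht]
      obtain ⟨s, hs, -⟩ := (conf_isKernelOf hcψθT).existsUnique (t ≫ v') h1
      have h2 : s ≫ m = 0 := by
        rw [← hψθK, ← Category.assoc, hs, Category.assoc, hv'θK0, comp_zero]
      obtain ⟨s', hs', -⟩ := hwm.existsUnique s h2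
      refine ⟨s', ?_, ?_⟩
      · show s' ≫ m₂ = t
        rw [← cancel_mono v', Category.assoc, hm₂, ← Category.assoc, hs', hs]
      · intro y hy
        have hy' : y ≫ m₂ = t := hy
        rw [← cancel_mono m₂, hy', ← cancel_mono v', Category.assoc, hm₂,
          ← Category.assoc, hs', hs]
  have hcm₂σ : S.IsConflation m₂ (v' ≫ θT) :=
    conflation_of_deflation_isKernelOf hσdefl hm₂σ
  haveI := (conf_isCokernelOf hcm₂σ).epi
  have hστ : (v' ≫ θT) ≫ τ = v ≫ c := by
    rw [Category.assoc, hθT, ← Category.assoc, hv']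
  have hπm₂ : π ≫ m₂ = β := by
    rw [← cancel_mono v, Category.assoc, hm₂v, ← Category.assoc, hπ,
      Category.assoc, hpi, hβ]
  have hcγ : c ≫ σ' ≫ τ' = g ≫ e := by
    rw [← Category.assoc, hσ', Category.assoc, hρ, ← Category.assoc, hqj]
  -- assemble everything
  refine ⟨Kf, Kh, Kg, Cf, Ch, Cg, u, w, v, c, e, d, α, β, σ' ≫ τ', ε,
    hkf, hkh, hkg, hcf, hch, hcg, hαw, hβ, hcγ, hε, ?_, ?_, ?_, ?_, ?_, ?_⟩
  · -- exactness at Kf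
    constructor
    · exact ⟨(0 : C), 𝟙 (0 : C), 0, hDE.R0, isInflation_zero_from hDE Kf, by simp,
        isKernelOf_zero_of_mono inferInstance⟩
    · exact ⟨Kf, 𝟙 Kf, α, isDeflation_id hDE Kf, ⟨_, π, hcαπ⟩, Category.id_comp α,
        isCokernelOf_id_zero Kf⟩
  · -- exactness at Kh
    constructor
    · refine ⟨Kf, 𝟙 Kf, α, isDeflation_id hDE Kf, ⟨_, π, hcαπ⟩, Category.id_comp α, ?_⟩
      have := (conf_isKernelOf hcαπ).comp_mono m₂ inferInstance
      rwa [hπm₂] at this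
    · exact ⟨Km, π, m₂, ⟨_, α, hcαπ⟩, ⟨_, v' ≫ θT, hcm₂σ⟩, hπm₂, conf_isCokernelOf hcαπ⟩
  · -- exactness at Kg
    constructor
    · refine ⟨Km, π, m₂, ⟨_, α, hcαπ⟩, ⟨_, v' ≫ θT, hcm₂σ⟩, hπm₂, ?_⟩
      have := hm₂σ.comp_mono τ inferInstance
      rwa [hστ] at this
    · refine ⟨T, v' ≫ θT, τ, ⟨_, m₂, hcm₂σ⟩, ⟨_, σ', hcτ⟩, hστ, ?_⟩
      have := (conf_isCokernelOf hcm₂σ).epi_comp π inferInstance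
      rwa [hπm₂] at this
  · -- exactness at Cf
    constructor
    · exact ⟨T, v' ≫ θT, τ, ⟨_, m₂, hcm₂σ⟩, ⟨_, σ', hcτ⟩, hστ,
        hτ.comp_mono τ' inferInstance⟩
    · refine ⟨T', σ', τ', ⟨_, τ, hcτ⟩, ⟨_, ε, hcτ'⟩, rfl, ?_⟩
      have := (conf_isCokernelOf hcτ).epi_comp (v' ≫ θT) inferInstance
      rwa [hστ] at this
  · -- exactness at Ch
    constructor
    · exact ⟨T', σ', τ', ⟨_, τ, hcτ⟩, ⟨_, ε, hcτ'⟩, rfl, hτ'⟩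
    · exact ⟨Cg, ε, 𝟙 Cg, ⟨_, τ', hcτ'⟩, isInflation_id hDE hR3p Cg, Category.comp_id ε,
        (conf_isCokernelOf hcτ').epi_comp σ' inferInstance⟩
  · -- exactness at Cg
    constructor
    · exact ⟨Cg, ε, 𝟙 Cg, ⟨_, τ', hcτ'⟩, isInflation_id hDE hR3p Cg, Category.comp_id ε,
        isKernelOf_id_zero Cg⟩
    · exact ⟨(0 : C), 0, 𝟙 (0 : C), isDeflation_to_zero hDE hR3p Cg,
        isInflation_id hDE hR3p (0 : C), by simp, isCokernelOf_zero_of_epi inferInstance⟩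
end
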